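/- arXiv:2003.06876 — 6 statements merged into one kernel-verified Lean document; each statement's English description precedes it below -/
import Mathlib

section
/- Let f ∈ L¹(ℝ), let m be a continuous linear functional on L^∞(ℝ), and let φ : ℝ → ℝ be bounded and uniformly continuous. For t ∈ ℝ let φ_t(x) = φ(x+t), regarded as an element of L^∞(ℝ). Then m(f⋆φ) = ∫_ℝ m(φ_t) f(−t) dt, where the integrand t ↦ m(φ_t) is a bounded continuous function so the integral exists. -/
/-!
Translation of a bounded uniformly continuous `φ` is a continuous map `t ↦ φ_t` into `L^∞`, so
`t ↦ f t • φ_{-t}` is Bochner integrable in `L^∞`. Integrating its Bochner integral over sets of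
finite measure (a continuous functional, by pairing with indicators in `L¹`) and applying Fubini
shows that it is `f⋆φ`; the identity follows since `m` commutes with the Bochner integral.
-/

open MeasureTheory Filter

/-- The convolution `(f⋆φ)(x) = ∫ φ(x-t) f(t) dt`. -/
noncomputable def conv (f φ : ℝ → ℝ) (x : ℝ) : ℝ := ∫ t : ℝ, φ (x - t) * f t

open scoped ENNReal

namespace MeasureTheory.Lp

variable {α E : Type*} [MeasurableSpace α] {μ : Measure α} [NormedAddCommGroup E]

theorem norm_le_of_ae_bound_top {u : Lp E ∞ μ} {C : ℝ} (hC : 0 ≤ C)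
    (h : ∀ᵐ x ∂μ, ‖u x‖ ≤ C) : ‖u‖ ≤ C := by
  rw [norm_def, eLpNorm_exponent_top]
  exact ENNReal.toReal_le_of_le_ofReal hC (eLpNormEssSup_le_of_ae_bound h)

section Translation

variable [SeminormedAddCommGroup α]

theorem uniformContinuous_of_ae_eq_translate {φ : α → E} (hφ : UniformContinuous φ)
    {Φ : α → Lp E ∞ μ} (hΦ : ∀ t, Φ t =ᵐ[μ] fun x => φ (x + t)) : UniformContinuous Φ := by
  refine Metric.uniformContinuous_iff.2 fun ε hε => ?_
  obtain ⟨δ, hδ, hφδ⟩ := Metric.uniformContinuous_iff.1 hφ (ε / 2) (half_pos hε)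
  refine ⟨δ, hδ, fun {s t} hst => ?_⟩
  have hdist : ∀ x, dist (x + s) (x + t) < δ := fun x => by rwa [dist_add_left]
  calc dist (Φ s) (Φ t) = ‖Φ s - Φ t‖ := dist_eq_norm_sub _ _
    _ ≤ ε / 2 := norm_le_of_ae_bound_top (half_pos hε).le <| by
        filter_upwards [coeFn_sub (Φ s) (Φ t), hΦ s, hΦ t] with x hsub hs ht
        rw [hsub, Pi.sub_apply, hs, ht, ← dist_eq_norm_sub]
        exact (hφδ (hdist x)).le
    _ < ε := half_lt_self hε

end Translation

theorem integrableOn_top (u : Lp E ∞ μ) {s : Set α} (hs : μ s < ∞) : IntegrableOn u s μ :=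
  have : IsFiniteMeasure (μ.restrict s) := isFiniteMeasure_restrict.2 hs.ne
  ((Lp.memLp u).restrict s).integrable le_top

variable [NormedSpace ℝ E] [CompleteSpace E]

theorem setIntegral_eq_lpPairing (u : Lp E ∞ μ) {s : Set α} (hs : MeasurableSet s)
    (hμs : μ s < ∞) :
    ∫ x in s, u x ∂μ =
      (ContinuousLinearMap.lsmul ℝ ℝ).lpPairing μ 1 ∞ (indicatorConstLp 1 hs hμs.ne (1 : ℝ)) u := by
  rw [ContinuousLinearMap.lpPairing_eq_integral, ← integral_indicator hs]
  refine integral_congr_ae ?_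
  filter_upwards [indicatorConstLp_coeFn (p := 1) (hs := hs) (hμs := hμs.ne) (c := (1 : ℝ))]
    with x hx
  by_cases hxs : x ∈ s <;> simp [hx, hxs]

variable {T : Type*} [MeasurableSpace T] {ν : Measure T}

theorem setIntegral_coeFn_integral {G : T → Lp E ∞ μ} (hG : Integrable G ν) {s : Set α}
    (hs : MeasurableSet s) (hμs : μ s < ∞) :
    ∫ x in s, (∫ t, G t ∂ν) x ∂μ = ∫ t, ∫ x in s, G t x ∂μ ∂ν := by
  simp only [setIntegral_eq_lpPairing _ hs hμs]
  exact ((ContinuousLinearMap.lsmul ℝ ℝ).lpPairing μ 1 ∞ _).integral_comp_comm hG |>.symm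

theorem coeFn_integral_top_ae_eq [SigmaFinite μ] [SFinite ν] {G : T → Lp E ∞ μ}
    (hG : Integrable G ν) {k : α → T → E} (hGk : ∀ t, G t =ᵐ[μ] fun x => k x t)
    (hk : ∀ s, MeasurableSet s → μ s < ∞ →
      Integrable (Function.uncurry k) ((μ.restrict s).prod ν)) :
    ⇑(∫ t, G t ∂ν) =ᵐ[μ] fun x => ∫ t, k x t ∂ν := by
  refine ae_eq_of_forall_setIntegral_eq_of_sigmaFinite (fun s _ hμs => integrableOn_top _ hμs)
    (fun s hs hμs => (hk s hs hμs).integral_prod_left) fun s hs hμs => ?_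
  rw [setIntegral_coeFn_integral hG hs hμs, integral_integral_swap (hk s hs hμs)]
  exact integral_congr_ae (.of_forall fun t => setIntegral_congr_ae hs
    (by filter_upwards [hGk t] with x hx _ using hx))

end MeasureTheory.Lp

theorem integrable_uncurry_mul_sub {φ f : ℝ → ℝ} {M : ℝ} (hφ : Continuous φ)
    (hM : ∀ x, |φ x| ≤ M) {ν : Measure ℝ} [SFinite ν] (hf : Integrable f ν) (μ : Measure ℝ)
    [IsFiniteMeasure μ] :
    Integrable (Function.uncurry fun x t => φ (x - t) * f t) (μ.prod ν) :=
  (hf.comp_snd μ).bdd_mul (hφ.comp continuous_sub).aestronglyMeasurable (.of_forall fun _ => hM _)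

/-- For `f ∈ L¹(ℝ)`, a continuous linear functional `m` on `L^∞(ℝ)` and a bounded
uniformly continuous `φ`, `m(f⋆φ) = ∫ m(φ_t) f(-t) dt`, where `Φ t` is the translate
`φ_t(x) = φ(x+t)` regarded as an element of `L^∞(ℝ)` and `ψ` is `f⋆φ` regarded as an
element of `L^∞(ℝ)`. -/
theorem clf_conv_eq_integral (f : ℝ → ℝ) (hf : Integrable f)
    (m : Lp ℝ ⊤ (volume : Measure ℝ) →L[ℝ] ℝ)
    (φ : ℝ → ℝ) (hbdd : ∃ M : ℝ, ∀ x, |φ x| ≤ M) (huc : UniformContinuous φ)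
    (Φ : ℝ → Lp ℝ ⊤ (volume : Measure ℝ))
    (hΦ : ∀ t : ℝ, ⇑(Φ t) =ᵐ[volume] fun x => φ (x + t))
    (ψ : Lp ℝ ⊤ (volume : Measure ℝ))
    (hψ : ⇑ψ =ᵐ[volume] fun x => conv f φ x) :
    m ψ = ∫ t : ℝ, m (Φ t) * f (-t) := by
  obtain ⟨M, hM⟩ := hbdd
  have hΦ_cont : Continuous Φ := (Lp.uniformContinuous_of_ae_eq_translate huc hΦ).continuous
  have hΦ_bdd : ∀ t, ‖Φ t‖ ≤ M := fun t =>
    Lp.norm_le_of_ae_bound_top ((abs_nonneg _).trans (hM 0)) <| by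
      filter_upwards [hΦ t] with x hx using hx ▸ hM (x + t)
  have hG : Integrable (fun t => f t • Φ (-t)) :=
    hf.smul_bdd M (hΦ_cont.comp continuous_neg).aestronglyMeasurable
      (.of_forall fun t => hΦ_bdd (-t))
  have hψ_eq : ψ = ∫ t, f t • Φ (-t) := by
    refine Lp.ext <| hψ.trans
      (Lp.coeFn_integral_top_ae_eq hG (fun t => ?_) fun s _ hs => ?_).symm
    · filter_upwards [Lp.coeFn_smul (f t) (Φ (-t)), hΦ (-t)] with x hsmul hx
      rw [hsmul, Pi.smul_apply, hx, smul_eq_mul, mul_comm, sub_eq_add_neg]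
    · have : IsFiniteMeasure (volume.restrict s) := isFiniteMeasure_restrict.2 hs.ne
      exact integrable_uncurry_mul_sub huc.continuous hM hf _
  calc m ψ = ∫ t, f t * m (Φ (-t)) := by
        rw [hψ_eq, ← m.integral_comp_comm hG]
        simp only [map_smul, smul_eq_mul]
    _ = ∫ t, m (Φ t) * f (-t) := by
        rw [← integral_neg_eq_self]
        simp only [neg_neg, mul_comm]
end

section
/- Let f ∈ L¹(ℝ) with ∫_ℝ f(x)dx = 1 and let φ : ℝ → ℝ be essentially bounded and measurable. Then limsup_{x→∞} (1/θ)∫_x^{x+θ} (φ(t) − (f⋆φ)(t)) dt tends to 0 as θ → ∞; in other words P̄(φ − f⋆φ) = 0. -/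
open MeasureTheory Filter

lemma abs_limsup_le_aux {u : ℝ → ℝ} {c : ℝ} (h : ∀ x, |u x| ≤ c) :
    |limsup u atTop| ≤ c := by
  have hub : ∀ x, u x ≤ c := fun x => (abs_le.1 (h x)).2
  have hlb : ∀ x, -c ≤ u x := fun x => (abs_le.1 (h x)).1
  rw [abs_le]
  constructor
  · refine le_limsup_of_le (isBoundedUnder_of ⟨c, hub⟩) fun b hb => ?_
    obtain ⟨x, hx⟩ := hb.exists
    exact le_trans (hlb x) hx
  · exact limsup_le_of_le (isCoboundedUnder_le_of_le _ hlb) (Eventually.of_forall hub)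

lemma intervalIntegrable_of_bound {g : ℝ → ℝ} (hm : AEStronglyMeasurable g volume)
    {c : ℝ} (hb : ∀ x, |g x| ≤ c) (a b : ℝ) : IntervalIntegrable g volume a b := by
  constructor <;>
  · refine Integrable.mono' (g := fun _ => c)
      (integrableOn_const measure_Ioc_lt_top.ne) hm.restrict
      (ae_of_all _ fun x => ?_)
    simpa using hb x

/-- For `f ∈ L¹(ℝ)` with `∫ f = 1` and an essentially bounded measurable `φ`,
`limsup_{x→∞} (1/θ) ∫_x^{x+θ} (φ(t) - (f⋆φ)(t)) dt → 0` as `θ → ∞`;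
that is, `P̄(φ - f⋆φ) = 0`. -/
theorem Pbar_sub_conv_eq_zero (f : ℝ → ℝ) (hf : Integrable f) (hone : ∫ x, f x = 1)
    (φ : ℝ → ℝ) (hmeas : Measurable φ) (hbdd : MemLp φ ⊤ (volume : Measure ℝ)) :
    Tendsto (fun θ : ℝ =>
        limsup (fun x : ℝ => (1 / θ) * ∫ t in x..(x + θ), (φ t - conv f φ t)) atTop)
      atTop (nhds 0) := by
  -- essential bound
  obtain ⟨C, hC0, hae⟩ : ∃ C : ℝ, 0 ≤ C ∧ ∀ᵐ x : ℝ, |φ x| ≤ C := by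
    refine ⟨(eLpNorm φ ⊤ volume).toReal, ENNReal.toReal_nonneg, ?_⟩
    have hlt : eLpNorm φ ⊤ volume < ⊤ := hbdd.2
    filter_upwards [ae_le_eLpNormEssSup (f := φ) (μ := volume)] with x hx
    rw [eLpNorm_exponent_top] at hlt
    have := ENNReal.toReal_mono hlt.ne hx
    simpa [Real.norm_eq_abs] using this
  -- truncation
  have h2C : (0:ℝ) ≤ 2*C := by linarith
  set ψ : ℝ → ℝ := fun y => max (-C) (min (φ y) C) with hψdef
  have hψm : Measurable ψ := measurable_const.max ((hmeas.min measurable_const))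
  have hψb : ∀ y, |ψ y| ≤ C := by
    intro y
    rw [abs_le]
    refine ⟨le_max_left _ _, max_le (by linarith) (min_le_right _ _)⟩
  have hψφ : φ =ᵐ[volume] ψ := by
    filter_upwards [hae] with x hx
    rw [abs_le] at hx
    show φ x = max (-C) (min (φ x) C)
    rw [min_eq_left hx.2, max_eq_right hx.1]
  have hψint : ∀ a b : ℝ, IntervalIntegrable ψ volume a b :=
    intervalIntegrable_of_bound hψm.aestronglyMeasurable hψb
  -- conv f φ = conv f ψ pointwise
  have hconv_eq : ∀ x, conv f φ x = conv f ψ x := by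
    intro x
    refine integral_congr_ae ?_
    have hq : Measure.QuasiMeasurePreserving (fun t : ℝ => x - t) volume volume :=
      (Measure.measurePreserving_sub_left volume x).quasiMeasurePreserving
    filter_upwards [hq.ae_eq hψφ] with t ht
    simp only [Function.comp] at ht
    rw [ht]
  -- conv f ψ is bounded and aestrongly measurable
  have hCf : ∀ x, |conv f ψ x| ≤ C * ∫ s, |f s| := by
    intro x
    calc |conv f ψ x| ≤ ∫ s, |ψ (x - s)| * |f s| := by
          simpa [conv, Real.norm_eq_abs, abs_mul] using
            norm_integral_le_integral_norm (μ := volume) (f := fun s => ψ (x - s) * f s)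
      _ ≤ ∫ s, C * |f s| := by
          refine integral_mono_of_nonneg
            (ae_of_all _ fun s => mul_nonneg (abs_nonneg _) (abs_nonneg _))
            (hf.norm.const_mul C) (ae_of_all _ fun s => ?_)
          exact mul_le_mul_of_nonneg_right (hψb _) (abs_nonneg _)
      _ = C * ∫ s, |f s| := integral_const_mul C _
  have hconv_meas : AEStronglyMeasurable (conv f ψ) volume := by
    have : AEStronglyMeasurable (fun p : ℝ × ℝ => ψ (p.1 - p.2) * f p.2)
        ((volume : Measure ℝ).prod (volume : Measure ℝ)) :=
      ((hψm.comp (measurable_fst.sub measurable_snd)).aestronglyMeasurable).mul hf.1.comp_snd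
    exact this.integral_prod_right'
  have hconvint : ∀ a b : ℝ, IntervalIntegrable (conv f ψ) volume a b :=
    intervalIntegrable_of_bound hconv_meas hCf
  -- primitive
  set G : ℝ → ℝ := fun y => ∫ t in (0:ℝ)..y, ψ t with hGdef
  have hGc : Continuous G := intervalIntegral.continuous_primitive (fun a b => hψint a b) 0
  have hΦ_eq : ∀ a θ : ℝ, (∫ t in a..(a+θ), ψ t) = G (a+θ) - G a := by
    intro a θ
    simp only [hGdef]
    exact (intervalIntegral.integral_interval_sub_left (hψint 0 (a+θ)) (hψint 0 a)).symm
  -- key estimate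
  have key : ∀ θ : ℝ, 0 < θ → ∀ x : ℝ,
      |∫ t in x..(x+θ), (ψ t - conv f ψ t)| ≤ ∫ s, |f s| * (2*C*min |s| θ) := by
    intro θ hθ x
    set K : ℝ := ∫ t in x..(x+θ), ψ t with hK
    set Φ : ℝ → ℝ := fun s => ∫ t in (x-s)..(x-s+θ), ψ t with hΦdef
    have hprod : Integrable (fun p : ℝ × ℝ => ψ (p.1 - p.2) * f p.2)
        ((volume.restrict (Set.Ioc x (x+θ))).prod volume) := by
      have hm : AEStronglyMeasurable (fun p : ℝ × ℝ => ψ (p.1 - p.2) * f p.2)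
          ((volume.restrict (Set.Ioc x (x+θ))).prod volume) :=
        ((hψm.comp (measurable_fst.sub measurable_snd)).aestronglyMeasurable).mul hf.1.comp_snd
      have hc : Integrable (fun _ : ℝ => C) (volume.restrict (Set.Ioc x (x+θ))) :=
        integrableOn_const measure_Ioc_lt_top.ne
      refine Integrable.mono' (hc.mul_prod hf.norm) hm (ae_of_all _ fun p => ?_)
      rw [Real.norm_eq_abs, abs_mul]
      exact mul_le_mul_of_nonneg_right (hψb _) (abs_nonneg _)
    have step1 : (∫ t in x..(x+θ), conv f ψ t) = ∫ s, f s * Φ s := by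
      rw [intervalIntegral.integral_of_le (by linarith : x ≤ x + θ)]
      calc (∫ t in Set.Ioc x (x+θ), conv f ψ t)
          = ∫ t in Set.Ioc x (x+θ), ∫ s, ψ (t - s) * f s := rfl
        _ = ∫ s, ∫ t in Set.Ioc x (x+θ), ψ (t - s) * f s := integral_integral_swap hprod
        _ = ∫ s, f s * Φ s := by
            refine integral_congr_ae (ae_of_all _ fun s => ?_)
            show (∫ t in Set.Ioc x (x+θ), ψ (t - s) * f s) = f s * Φ s
            rw [MeasureTheory.integral_mul_const,
              ← intervalIntegral.integral_of_le (by linarith : x ≤ x + θ),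
              intervalIntegral.integral_comp_sub_right ψ s, mul_comm]
            have hxs : x + θ - s = x - s + θ := by ring
            rw [hxs, hΦdef]
    have step2 : K = ∫ s, f s * K := by
      rw [MeasureTheory.integral_mul_const, hone, one_mul]
    have hmul1 : Integrable (fun s => f s * K) volume := hf.mul_const K
    have hΦc : Continuous Φ := by
      have hfe : Φ = fun s => G (x - s + θ) - G (x - s) :=
        funext fun s => hΦ_eq (x - s) θ
      rw [hfe]
      exact (hGc.comp ((continuous_const.sub continuous_id).add continuous_const)).sub
        (hGc.comp (continuous_const.sub continuous_id))
    have hΦb : ∀ s : ℝ, |Φ s| ≤ C * θ := by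
      intro s
      have h := intervalIntegral.norm_integral_le_of_norm_le_const
        (C := C) (f := ψ) (a := x-s) (b := x-s+θ)
        (fun t _ => by simpa [Real.norm_eq_abs] using hψb t)
      have he : x - s + θ - (x - s) = θ := by ring
      rw [he, abs_of_pos hθ] at h
      simpa [Real.norm_eq_abs, hΦdef] using h
    have hmul2 : Integrable (fun s => f s * Φ s) volume := by
      have h2 := Integrable.bdd_mul (c := C*θ) hf hΦc.aestronglyMeasurable
        (ae_of_all _ fun s => by simpa [Real.norm_eq_abs] using hΦb s)
      exact h2.congr (ae_of_all _ fun s => mul_comm _ _)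
    have key_eq : (∫ t in x..(x+θ), (ψ t - conv f ψ t)) = ∫ s, f s * (K - Φ s) := by
      rw [intervalIntegral.integral_sub (hψint _ _) (hconvint _ _), step1, ← hK]
      calc K - ∫ s, f s * Φ s = (∫ s, f s * K) - ∫ s, f s * Φ s := by rw [← step2]
        _ = ∫ s, (f s * K - f s * Φ s) := (integral_sub hmul1 hmul2).symm
        _ = ∫ s, f s * (K - Φ s) := by simp [mul_sub]
    have hKb : |K| ≤ C * θ := by
      have h := intervalIntegral.norm_integral_le_of_norm_le_const
        (C := C) (f := ψ) (a := x) (b := x+θ)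
        (fun t _ => by simpa [Real.norm_eq_abs] using hψb t)
      have he : x + θ - x = θ := by ring
      rw [he, abs_of_pos hθ] at h
      simpa [Real.norm_eq_abs, hK] using h
    have hdiff : ∀ s : ℝ, |K - Φ s| ≤ 2*C*min |s| θ := by
      intro s
      have h1 : (∫ t in (x-s)..(x+θ), ψ t) - (∫ t in (x-s)..x, ψ t) = K :=
        intervalIntegral.integral_interval_sub_left (hψint _ _) (hψint _ _)
      have h2 : (∫ t in (x-s)..(x+θ), ψ t) - Φ s = ∫ t in (x-s+θ)..(x+θ), ψ t := by
        rw [hΦdef]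
        exact intervalIntegral.integral_interval_sub_left (hψint _ _) (hψint _ _)
      have e1 : K - Φ s = (∫ t in (x-s+θ)..(x+θ), ψ t) - ∫ t in (x-s)..x, ψ t := by
        linarith
      have hb1 : |∫ t in (x-s+θ)..(x+θ), ψ t| ≤ C * |s| := by
        have h := intervalIntegral.norm_integral_le_of_norm_le_const
          (C := C) (f := ψ) (a := x-s+θ) (b := x+θ)
          (fun t _ => by simpa [Real.norm_eq_abs] using hψb t)
        have he : x + θ - (x - s + θ) = s := by ring
        rw [he] at h
        simpa [Real.norm_eq_abs] using h
      have hb2 : |∫ t in (x-s)..x, ψ t| ≤ C * |s| := by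
        have h := intervalIntegral.norm_integral_le_of_norm_le_const
          (C := C) (f := ψ) (a := x-s) (b := x)
          (fun t _ => by simpa [Real.norm_eq_abs] using hψb t)
        have he : x - (x - s) = s := by ring
        rw [he] at h
        simpa [Real.norm_eq_abs] using h
      have habs : |K - Φ s| ≤ |(∫ t in (x-s+θ)..(x+θ), ψ t)| + |∫ t in (x-s)..x, ψ t| := by
        rw [e1]; exact abs_sub _ _
      have habs2 : |K - Φ s| ≤ |K| + |Φ s| := abs_sub _ _
      rcases le_total |s| θ with h | h
      · rw [min_eq_left h]
        calc |K - Φ s| ≤ C * |s| + C * |s| := le_trans habs (add_le_add hb1 hb2)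
          _ = 2*C*|s| := by ring
      · rw [min_eq_right h]
        calc |K - Φ s| ≤ C * θ + C * θ := le_trans habs2 (add_le_add hKb (hΦb s))
          _ = 2*C*θ := by ring
    rw [key_eq]
    have hbint : Integrable (fun s => |f s| * (2*C*min |s| θ)) volume := by
      have h2 := Integrable.bdd_mul (c := 2*C*θ)
        (f := fun s : ℝ => 2*C*min |s| θ) hf.norm
        ((continuous_const.mul (continuous_abs.min continuous_const)).aestronglyMeasurable)
        (ae_of_all _ fun s => by
          have hmn : (0:ℝ) ≤ min |s| θ := le_min (abs_nonneg _) hθ.le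
          rw [Real.norm_eq_abs, abs_of_nonneg (mul_nonneg h2C hmn)]
          exact mul_le_mul_of_nonneg_left (min_le_right _ _) h2C)
      exact h2.congr (ae_of_all _ fun s => mul_comm _ _)
    have := MeasureTheory.norm_integral_le_of_norm_le hbint (ae_of_all _ fun s => by
      rw [Real.norm_eq_abs, abs_mul]
      exact mul_le_mul_of_nonneg_left (hdiff s) (abs_nonneg _))
    simpa [Real.norm_eq_abs] using this
  -- the dominating integral
  set I : ℝ → ℝ := fun θ => ∫ s, |f s| * (2*C*min (|s|/θ) 1) with hIdef
  have hstep5 : ∀ θ : ℝ, 0 < θ → ∀ x : ℝ,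
      |(1/θ) * ∫ t in x..(x+θ), (φ t - conv f φ t)| ≤ I θ := by
    intro θ hθ x
    have hcongr : (∫ t in x..(x+θ), (φ t - conv f φ t))
        = ∫ t in x..(x+θ), (ψ t - conv f ψ t) := by
      refine intervalIntegral.integral_congr_ae ?_
      filter_upwards [hψφ] with t ht _
      rw [ht, hconv_eq]
    rw [hcongr, abs_mul, abs_of_pos (by positivity : (0:ℝ) < 1/θ)]
    have h1 := key θ hθ x
    have h2 : (1/θ) * (∫ s, |f s| * (2*C*min |s| θ)) = I θ := by
      rw [hIdef, ← MeasureTheory.integral_const_mul]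
      refine integral_congr_ae (ae_of_all _ fun s => ?_)
      have hmin : min |s| θ / θ = min (|s|/θ) 1 := by
        rw [← min_div_div_right hθ.le, div_self hθ.ne']
      calc (1/θ) * (|f s| * (2*C*min |s| θ)) = |f s| * (2*C*(min |s| θ / θ)) := by ring
        _ = |f s| * (2*C*min (|s|/θ) 1) := by rw [hmin]
    calc (1/θ) * |∫ t in x..(x+θ), (ψ t - conv f ψ t)|
        ≤ (1/θ) * ∫ s, |f s| * (2*C*min |s| θ) :=
          mul_le_mul_of_nonneg_left h1 (by positivity)
      _ = I θ := h2
  have htendI : Tendsto I atTop (nhds 0) := by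
    have hdct := MeasureTheory.tendsto_integral_filter_of_dominated_convergence
      (μ := volume) (l := atTop) (F := fun (θ : ℝ) (s : ℝ) => |f s| * (2*C*min (|s|/θ) 1))
      (f := fun _ : ℝ => (0:ℝ)) (bound := fun s => |f s| * (2*C))
      (Eventually.of_forall fun θ =>
        hf.1.norm.mul ((continuous_const.mul ((continuous_abs.div_const θ).min
          continuous_const)).aestronglyMeasurable))
      (by
        filter_upwards [eventually_gt_atTop (0:ℝ)] with θ hθ
        refine ae_of_all _ fun s => ?_
        have hmn : 0 ≤ min (|s|/θ) 1 := le_min (by positivity) zero_le_one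
        rw [Real.norm_eq_abs,
          abs_of_nonneg (mul_nonneg (abs_nonneg _) (mul_nonneg h2C hmn))]
        refine mul_le_mul_of_nonneg_left ?_ (abs_nonneg _)
        calc 2*C*min (|s|/θ) 1 ≤ 2*C*1 :=
              mul_le_mul_of_nonneg_left (min_le_right _ _) h2C
          _ = 2*C := by ring)
      (hf.norm.mul_const (2*C))
      (ae_of_all _ fun s => by
        have h1 : Tendsto (fun θ : ℝ => |s|/θ) atTop (nhds 0) :=
          tendsto_const_nhds.div_atTop tendsto_id
        have h2 : Tendsto (fun θ : ℝ => min (|s|/θ) 1) atTop (nhds 0) := by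
          have := h1.min (tendsto_const_nhds (x := (1:ℝ)))
          simpa [min_eq_left zero_le_one] using this
        have := (tendsto_const_nhds (x := |f s|)).mul
          ((tendsto_const_nhds (x := 2*C)).mul h2)
        simpa using this)
    simpa [hIdef] using hdct
  refine squeeze_zero_norm' ?_ htendI
  filter_upwards [eventually_gt_atTop (0:ℝ)] with θ hθ
  simpa [Real.norm_eq_abs] using abs_limsup_le_aux (hstep5 θ hθ)
end

section
/- Let f ∈ L¹(ℝ) with f ≥ 0 almost everywhere and ∫_ℝ f(x)dx = 1, and let m be a continuous linear functional on L^∞(ℝ) satisfying m(f⋆φ) = m(φ) for every φ ∈ L^∞(ℝ). Then m admits a Jordan decomposition within the f-invariant functionals: there exist continuous linear functionals m₊ and m₋ on L^∞(ℝ), both positive (m_±(φ) ≥ 0 whenever φ ≥ 0 a.e.) and both satisfying m_±(f⋆φ) = m_±(φ) for all φ ∈ L^∞(ℝ), such that m = m₊ − m₋ and ‖m‖ = ‖m₊‖ + ‖m₋‖. -/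
open MeasureTheory Filter

/-!
The positive part of `m` is given by the Riesz–Kantorovich formula
`m⁺ φ = sup {m ψ | 0 ≤ ψ ≤ φ}` for `0 ≤ φ`, extended linearly, and `m⁻ = m⁺ - m`.
The constant `1` is an order unit of `L^∞` whose order interval `[-1, 1]` is the unit ball, so a
positive functional has norm equal to its value at `1`, and `2 m⁺ 1 ≤ ‖m‖ + m 1` then gives
`‖m⁺‖ + ‖m⁻‖ ≤ ‖m‖`. Convolution with `f` is a positive operator `T` fixing `1`, so `m ∘ T = m`
yields `m⁺ ≤ m⁺ ∘ T` on nonnegative functions; applied to both `φ` and `‖φ‖ • 1 - φ`, this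
inequality becomes an equality.
-/

section SolidNorm

variable {E : Type*} [NormedAddCommGroup E] [Lattice E] [HasSolidNorm E] [IsOrderedAddMonoid E]

lemma norm_le_norm_of_nonneg_of_le {ψ φ : E} (h₀ : 0 ≤ ψ) (h : ψ ≤ φ) : ‖ψ‖ ≤ ‖φ‖ :=
  norm_le_norm_of_abs_le_abs <| by
    rw [abs_of_nonneg h₀, abs_of_nonneg (h₀.trans h)]; exact h

lemma norm_posPart_le (φ : E) : ‖φ⁺‖ ≤ ‖φ‖ := by
  simpa using lipschitzWith_posPart.dist_le_mul φ 0

lemma norm_negPart_le (φ : E) : ‖φ⁻‖ ≤ ‖φ‖ := by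
  simpa using lipschitzWith_negPart.dist_le_mul φ 0

end SolidNorm

namespace ContinuousLinearMap

variable {E : Type*} [NormedAddCommGroup E] [Lattice E] [NormedSpace ℝ E]

lemma norm_eq_apply_of_nonneg_of_abs_le [IsOrderedAddMonoid E] (ℓ : E →L[ℝ] ℝ)
    (hℓ : ∀ φ, 0 ≤ φ → 0 ≤ ℓ φ) {e : E} (he₀ : 0 ≤ e) (he₁ : ‖e‖ ≤ 1) (he : ∀ φ : E, |φ| ≤ ‖φ‖ • e) : ‖ℓ‖ = ℓ e := by
  have mono {a b : E} (h : a ≤ b) : ℓ a ≤ ℓ b := by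
    simpa using hℓ _ (sub_nonneg.2 h)
  refine le_antisymm (ℓ.opNorm_le_bound (hℓ e he₀) fun φ ↦ ?_) ?_
  · calc ‖ℓ φ‖ ≤ ℓ |φ| := abs_le'.2 ⟨mono (le_abs_self φ), by simpa using mono (neg_le_abs φ)⟩
      _ ≤ ℓ (‖φ‖ • e) := mono (he φ)
      _ = ℓ e * ‖φ‖ := by rw [map_smul, smul_eq_mul, mul_comm]
  · calc ℓ e ≤ ‖ℓ‖ * ‖e‖ := (le_abs_self _).trans (ℓ.le_opNorm e)
      _ ≤ ‖ℓ‖ := mul_le_of_le_one_right (norm_nonneg ℓ) he₁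

variable (m : E →L[ℝ] ℝ)

noncomputable def supIcc (φ : E) : ℝ := sSup (m '' Set.Icc 0 φ)

lemma supIcc_le {φ : E} (hφ : 0 ≤ φ) {C : ℝ} (h : ∀ ψ ∈ Set.Icc 0 φ, m ψ ≤ C) :
    m.supIcc φ ≤ C :=
  csSup_le ⟨m 0, Set.mem_image_of_mem m ⟨le_rfl, hφ⟩⟩ (Set.forall_mem_image.2 h)

lemma supIcc_zero : m.supIcc 0 = 0 := by
  simp [supIcc]

variable [HasSolidNorm E] [IsOrderedAddMonoid E]

lemma apply_le_opNorm_mul_of_mem_Icc {ψ φ : E} (hψ : ψ ∈ Set.Icc 0 φ) : m ψ ≤ ‖m‖ * ‖φ‖ :=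
  (le_abs_self _).trans <| (m.le_opNorm ψ).trans <|
    mul_le_mul_of_nonneg_left (norm_le_norm_of_nonneg_of_le hψ.1 hψ.2) (norm_nonneg m)

lemma le_supIcc {ψ φ : E} (hψ : ψ ∈ Set.Icc 0 φ) : m ψ ≤ m.supIcc φ :=
  le_csSup ⟨‖m‖ * ‖φ‖, Set.forall_mem_image.2 fun _ ↦ m.apply_le_opNorm_mul_of_mem_Icc⟩
    (Set.mem_image_of_mem m hψ)

lemma supIcc_nonneg {φ : E} (hφ : 0 ≤ φ) : 0 ≤ m.supIcc φ := by
  simpa using m.le_supIcc ⟨le_rfl, hφ⟩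

lemma supIcc_le_opNorm_mul {φ : E} (hφ : 0 ≤ φ) : m.supIcc φ ≤ ‖m‖ * ‖φ‖ :=
  m.supIcc_le hφ fun _ ↦ m.apply_le_opNorm_mul_of_mem_Icc

lemma supIcc_add {φ η : E} (hφ : 0 ≤ φ) (hη : 0 ≤ η) :
    m.supIcc (φ + η) = m.supIcc φ + m.supIcc η := by
  refine le_antisymm (m.supIcc_le (add_nonneg hφ hη) fun ψ hψ ↦ ?_) ?_
  · -- Riesz decomposition of `ψ ≤ φ + η` into pieces below `φ` and below `η`.
    have h₁ : ψ ⊓ φ ∈ Set.Icc 0 φ := ⟨le_inf hψ.1 hφ, inf_le_right⟩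
    have h₂ : ψ - ψ ⊓ φ ∈ Set.Icc 0 η := by
      refine ⟨sub_nonneg.2 inf_le_left, ?_⟩
      rw [sub_inf, sub_self]
      exact sup_le hη (sub_le_iff_le_add.2 (add_comm φ η ▸ hψ.2))
    calc m ψ = m (ψ ⊓ φ) + m (ψ - ψ ⊓ φ) := by rw [← map_add, add_sub_cancel]
      _ ≤ m.supIcc φ + m.supIcc η := add_le_add (m.le_supIcc h₁) (m.le_supIcc h₂)
  · rw [← le_sub_iff_add_le]
    refine m.supIcc_le hφ fun ψ₁ h₁ ↦ le_sub_comm.1 <| m.supIcc_le hη fun ψ₂ h₂ ↦ ?_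
    have := m.le_supIcc ⟨add_nonneg h₁.1 h₂.1, add_le_add h₁.2 h₂.2⟩
    rw [map_add] at this
    linarith

lemma supIcc_sub_supIcc_eq {a b c d : E} (ha : 0 ≤ a) (hb : 0 ≤ b) (hc : 0 ≤ c) (hd : 0 ≤ d)
    (h : a - b = c - d) : m.supIcc a - m.supIcc b = m.supIcc c - m.supIcc d := by
  have h' : m.supIcc (a + d) = m.supIcc (c + b) := by rw [sub_eq_sub_iff_add_eq_add.1 h]
  rw [m.supIcc_add ha hd, m.supIcc_add hc hb] at h'
  linarith

lemma supIcc_posPart_sub_supIcc_negPart {φ a b : E} (ha : 0 ≤ a) (hb : 0 ≤ b) (h : φ = a - b) :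
    m.supIcc φ⁺ - m.supIcc φ⁻ = m.supIcc a - m.supIcc b :=
  m.supIcc_sub_supIcc_eq (posPart_nonneg φ) (negPart_nonneg φ) ha hb
    (by rw [posPart_sub_negPart, h])

variable [PosSMulMono ℝ E]

lemma supIcc_smul {c : ℝ} (hc : 0 ≤ c) {φ : E} (hφ : 0 ≤ φ) :
    m.supIcc (c • φ) = c * m.supIcc φ := by
  rcases hc.eq_or_lt with rfl | hc
  · simp [supIcc_zero]
  refine le_antisymm (m.supIcc_le (smul_nonneg hc.le hφ) fun ψ hψ ↦ ?_) ?_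
  · have h : c⁻¹ • ψ ∈ Set.Icc 0 φ := by
      refine ⟨smul_nonneg (inv_nonneg.2 hc.le) hψ.1, ?_⟩
      simpa [smul_smul, inv_mul_cancel₀ hc.ne'] using
        smul_le_smul_of_nonneg_left hψ.2 (inv_nonneg.2 hc.le)
    calc m ψ = c * m (c⁻¹ • ψ) := by rw [map_smul, smul_eq_mul, mul_inv_cancel_left₀ hc.ne']
      _ ≤ c * m.supIcc φ := mul_le_mul_of_nonneg_left (m.le_supIcc h) hc.le
  · rw [mul_comm, ← le_div_iff₀ hc]
    refine m.supIcc_le hφ fun ψ hψ ↦ (le_div_iff₀ hc).2 ?_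
    have := m.le_supIcc ⟨smul_nonneg hc.le hψ.1, smul_le_smul_of_nonneg_left hψ.2 hc.le⟩
    rwa [map_smul, smul_eq_mul, mul_comm] at this

noncomputable def positivePart : E →L[ℝ] ℝ :=
  LinearMap.mkContinuous
    { toFun φ := m.supIcc φ⁺ - m.supIcc φ⁻
      map_add' φ η := by
        rw [m.supIcc_posPart_sub_supIcc_negPart (add_nonneg (posPart_nonneg φ) (posPart_nonneg η))
            (add_nonneg (negPart_nonneg φ) (negPart_nonneg η))
            (by rw [add_sub_add_comm, posPart_sub_negPart, posPart_sub_negPart]),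
          m.supIcc_add (posPart_nonneg φ) (posPart_nonneg η),
          m.supIcc_add (negPart_nonneg φ) (negPart_nonneg η)]
        ring
      map_smul' c φ := by
        rcases le_or_gt 0 c with hc | hc
        · rw [m.supIcc_posPart_sub_supIcc_negPart (smul_nonneg hc (posPart_nonneg φ))
              (smul_nonneg hc (negPart_nonneg φ)) (by rw [← smul_sub, posPart_sub_negPart]),
            m.supIcc_smul hc (posPart_nonneg φ), m.supIcc_smul hc (negPart_nonneg φ)]
          simp only [smul_eq_mul, RingHom.id_apply]
          ring
        · have hc' : 0 ≤ -c := neg_nonneg.2 hc.le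
          rw [m.supIcc_posPart_sub_supIcc_negPart (smul_nonneg hc' (negPart_nonneg φ))
              (smul_nonneg hc' (posPart_nonneg φ))
              (by rw [← smul_sub, neg_smul, ← smul_neg, neg_sub, posPart_sub_negPart]),
            m.supIcc_smul hc' (posPart_nonneg φ), m.supIcc_smul hc' (negPart_nonneg φ)]
          simp only [smul_eq_mul, RingHom.id_apply]
          ring }
    ‖m‖ fun φ ↦ abs_sub_le_of_nonneg_of_le
      (m.supIcc_nonneg (posPart_nonneg φ))
      ((m.supIcc_le_opNorm_mul (posPart_nonneg φ)).trans
        (mul_le_mul_of_nonneg_left (norm_posPart_le φ) (norm_nonneg m)))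
      (m.supIcc_nonneg (negPart_nonneg φ))
      ((m.supIcc_le_opNorm_mul (negPart_nonneg φ)).trans
        (mul_le_mul_of_nonneg_left (norm_negPart_le φ) (norm_nonneg m)))

lemma positivePart_apply_of_nonneg {φ : E} (hφ : 0 ≤ φ) : m.positivePart φ = m.supIcc φ := by
  rw [positivePart, LinearMap.mkContinuous_apply, LinearMap.coe_mk, AddHom.coe_mk,
    m.supIcc_posPart_sub_supIcc_negPart hφ le_rfl (sub_zero φ).symm, supIcc_zero, sub_zero]

lemma positivePart_nonneg {φ : E} (hφ : 0 ≤ φ) : 0 ≤ m.positivePart φ :=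
  m.positivePart_apply_of_nonneg hφ ▸ m.supIcc_nonneg hφ

lemma le_positivePart {φ : E} (hφ : 0 ≤ φ) : m φ ≤ m.positivePart φ :=
  m.positivePart_apply_of_nonneg hφ ▸ m.le_supIcc ⟨hφ, le_rfl⟩

lemma two_mul_positivePart_apply_le {e : E} (he₀ : 0 ≤ e) (he₁ : ‖e‖ ≤ 1) :
    2 * m.positivePart e ≤ ‖m‖ + m e := by
  rw [m.positivePart_apply_of_nonneg he₀, ← le_div_iff₀' two_pos]
  refine m.supIcc_le he₀ fun ψ hψ ↦ ?_
  -- `0 ≤ ψ ≤ e` puts `2ψ - e` in the order interval `[-e, e]`, hence in the unit ball.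
  have h : ‖(2 : ℝ) • ψ - e‖ ≤ 1 := by
    refine le_trans (norm_le_norm_of_abs_le_abs ?_) he₁
    rw [abs_of_nonneg he₀, abs_le', two_smul]
    exact ⟨sub_le_iff_le_add.2 (add_le_add hψ.2 hψ.2),
      by rw [neg_sub]; exact sub_le_self e (add_nonneg hψ.1 hψ.1)⟩
  have := (le_abs_self _).trans <|
    (m.le_opNorm ((2 : ℝ) • ψ - e)).trans (mul_le_of_le_one_right (norm_nonneg m) h)
  rw [map_sub, map_smul, smul_eq_mul] at this
  linarith

lemma norm_positivePart_add_norm_positivePart_sub {e : E} (he₀ : 0 ≤ e) (he₁ : ‖e‖ ≤ 1)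
    (he : ∀ φ : E, |φ| ≤ ‖φ‖ • e) : ‖m.positivePart‖ + ‖m.positivePart - m‖ = ‖m‖ := by
  refine le_antisymm ?_ (by simpa using norm_sub_le m.positivePart (m.positivePart - m))
  rw [norm_eq_apply_of_nonneg_of_abs_le _ (fun _ ↦ m.positivePart_nonneg) he₀ he₁ he,
    norm_eq_apply_of_nonneg_of_abs_le _ (fun _ hφ ↦ sub_nonneg.2 (m.le_positivePart hφ)) he₀ he₁ he,
    sub_apply]
  linarith [m.two_mul_positivePart_apply_le he₀ he₁]

lemma positivePart_comp_eq {e : E} (T : E →ₚ[ℝ] E) (hTe : T e = e) (hmT : ∀ φ, m (T φ) = m φ)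
    (he : ∀ φ : E, |φ| ≤ ‖φ‖ • e) (φ : E) : m.positivePart (T φ) = m.positivePart φ := by
  have le_of_nonneg {φ : E} (hφ : 0 ≤ φ) : m.positivePart φ ≤ m.positivePart (T φ) := by
    rw [m.positivePart_apply_of_nonneg hφ, m.positivePart_apply_of_nonneg (T.map_nonneg hφ)]
    exact m.supIcc_le hφ fun ψ hψ ↦
      hmT ψ ▸ m.le_supIcc ⟨T.map_nonneg hψ.1, T.monotone' hψ.2⟩
  -- Apply the inequality to `φ` and to `‖φ‖ • e - φ`, whose images under `T` add up to `‖φ‖ • e`.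
  have eq_of_nonneg {φ : E} (hφ : 0 ≤ φ) : m.positivePart (T φ) = m.positivePart φ := by
    have h := le_of_nonneg (sub_nonneg.2 ((le_abs_self φ).trans (he φ)))
    rw [map_sub, map_smul, map_sub, map_smul, hTe, map_sub, map_smul] at h
    exact le_antisymm (by linarith) (le_of_nonneg hφ)
  rw [← posPart_sub_negPart φ, map_sub, map_sub, map_sub, eq_of_nonneg (posPart_nonneg φ),
    eq_of_nonneg (negPart_nonneg φ)]

end ContinuousLinearMap

namespace MeasureTheory.Lp

variable {α : Type*} [MeasurableSpace α] {μ : Measure α}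

instance {p : ENNReal} : PosSMulMono ℝ (Lp ℝ p μ) where
  smul_le_smul_of_nonneg_left c hc φ η h := by
    rw [← coeFn_le] at h ⊢
    filter_upwards [h, coeFn_smul c φ, coeFn_smul c η] with x hx hφ hη
    rw [hφ, hη, Pi.smul_apply, Pi.smul_apply]
    exact smul_le_smul_of_nonneg_left hx hc

lemma ae_norm_le_norm_top {E : Type*} [NormedAddCommGroup E] (φ : Lp E ⊤ μ) :
    ∀ᵐ x ∂μ, ‖φ x‖ ≤ ‖φ‖ := by
  rw [norm_def, toReal_eLpNorm (Lp.aestronglyMeasurable φ)]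
  exact ae_le_lpNorm_exponent_top (Lp.memLp φ)

variable (μ) in
noncomputable def oneTop : Lp ℝ ⊤ μ := (memLp_top_const (1 : ℝ)).toLp _

lemma coeFn_oneTop : ⇑(oneTop μ) =ᵐ[μ] 1 := MemLp.coeFn_toLp _

lemma oneTop_nonneg : 0 ≤ oneTop μ := by
  rw [← coeFn_nonneg]
  filter_upwards [coeFn_oneTop] with x hx
  simp [hx]

lemma norm_oneTop_le : ‖oneTop μ‖ ≤ 1 := by
  rw [oneTop, norm_toLp, eLpNorm_exponent_top]
  exact ENNReal.toReal_le_of_le_ofReal zero_le_one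
    (eLpNormEssSup_le_of_ae_bound (Eventually.of_forall fun _ ↦ by simp))

lemma abs_le_norm_smul_oneTop (φ : Lp ℝ ⊤ μ) : |φ| ≤ ‖φ‖ • oneTop μ := by
  rw [← coeFn_le]
  filter_upwards [ae_norm_le_norm_top φ, coeFn_abs φ, coeFn_smul ‖φ‖ (oneTop μ), coeFn_oneTop]
    with x hx hφ h h₁
  rw [hφ, h, Pi.smul_apply, h₁]
  simpa using hx

end MeasureTheory.Lp

section Convolution

open Lp

variable {f : ℝ → ℝ}

lemma conv_congr_ae {g₁ g₂ : ℝ → ℝ} (h : g₁ =ᵐ[volume] g₂) : conv f g₁ = conv f g₂ := by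
  funext x
  refine integral_congr_ae ?_
  filter_upwards [(Measure.measurePreserving_sub_left volume x).quasiMeasurePreserving.ae_eq h]
    with t ht using congrArg (· * f t) ht

lemma conv_smul (c : ℝ) (g : ℝ → ℝ) : conv f (c • g) = c • conv f g := by
  funext x
  simp only [conv, Pi.smul_apply, smul_eq_mul, mul_assoc]
  exact integral_const_mul c _

lemma conv_one (hfone : ∫ x, f x = 1) : conv f 1 = 1 := by
  funext x
  simpa [conv] using hfone

lemma integrable_conv_integrand (hf : Integrable f) (φ : Lp ℝ ⊤ (volume : Measure ℝ)) (x : ℝ) :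
    Integrable (fun t ↦ φ (x - t) * f t) := by
  have h := (Measure.measurePreserving_sub_left volume x).quasiMeasurePreserving
  exact hf.bdd_mul ((Lp.aestronglyMeasurable φ).comp_quasiMeasurePreserving h)
    (h.ae (ae_norm_le_norm_top φ))

lemma conv_add (hf : Integrable f) (φ η : Lp ℝ ⊤ (volume : Measure ℝ)) :
    conv f ⇑(φ + η) = conv f φ + conv f η := by
  rw [conv_congr_ae (coeFn_add φ η)]
  funext x
  simp only [conv, Pi.add_apply, add_mul]
  exact integral_add (integrable_conv_integrand hf φ x) (integrable_conv_integrand hf η x)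

lemma norm_conv_le (hf : Integrable f) (φ : Lp ℝ ⊤ (volume : Measure ℝ)) (x : ℝ) :
    ‖conv f φ x‖ ≤ ‖φ‖ * ∫ t, ‖f t‖ := by
  rw [← integral_const_mul]
  refine norm_integral_le_of_norm_le (hf.norm.const_mul _) ?_
  filter_upwards [(Measure.measurePreserving_sub_left volume x).quasiMeasurePreserving.ae
    (ae_norm_le_norm_top φ)] with t ht
  rw [norm_mul]
  exact mul_le_mul_of_nonneg_right ht (norm_nonneg _)

lemma memLp_top_conv (hf : Integrable f) (φ : Lp ℝ ⊤ (volume : Measure ℝ)) :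
    MemLp (conv f φ) ⊤ volume := by
  have h : AEStronglyMeasurable (fun p : ℝ × ℝ ↦ φ (p.1 - p.2) * f p.2) (volume.prod volume) :=
    ((Lp.aestronglyMeasurable φ).comp_quasiMeasurePreserving
      (quasiMeasurePreserving_sub volume volume)).mul
      (hf.1.comp_quasiMeasurePreserving Measure.quasiMeasurePreserving_snd)
  exact memLp_top_of_bound h.integral_prod_right' _ (Eventually.of_forall (norm_conv_le hf φ))

noncomputable def convLinfty (hf : Integrable f) :
    Lp ℝ ⊤ (volume : Measure ℝ) →ₗ[ℝ] Lp ℝ ⊤ (volume : Measure ℝ) where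
  toFun φ := (memLp_top_conv hf φ).toLp (conv f φ)
  map_add' φ η := by
    simp_rw [conv_add hf φ η]
    exact MemLp.toLp_add _ _
  map_smul' c φ := by
    simp_rw [conv_congr_ae (coeFn_smul c φ), conv_smul]
    exact MemLp.toLp_const_smul _ _

lemma coeFn_convLinfty (hf : Integrable f) (φ : Lp ℝ ⊤ (volume : Measure ℝ)) :
    ⇑(convLinfty hf φ) =ᵐ[volume] conv f φ :=
  (memLp_top_conv hf φ).coeFn_toLp

lemma convLinfty_nonneg (hf : Integrable f) (hfpos : ∀ᵐ x ∂(volume : Measure ℝ), 0 ≤ f x)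
    {φ : Lp ℝ ⊤ (volume : Measure ℝ)} (hφ : 0 ≤ φ) : 0 ≤ convLinfty hf φ := by
  rw [← coeFn_nonneg] at hφ ⊢
  filter_upwards [coeFn_convLinfty hf φ] with x hx
  rw [Pi.zero_apply, hx]
  refine integral_nonneg_of_ae ?_
  filter_upwards [(Measure.measurePreserving_sub_left volume x).quasiMeasurePreserving.ae hφ, hfpos]
    with t h₁ h₂
  exact mul_nonneg h₁ h₂

lemma convLinfty_oneTop (hf : Integrable f) (hfone : ∫ x, f x = 1) :
    convLinfty hf (oneTop volume) = oneTop volume :=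
  MemLp.toLp_congr (memLp_top_conv hf _) (memLp_top_const 1) <| by
    rw [conv_congr_ae coeFn_oneTop, conv_one hfone]
    rfl

end Convolution

/-- Let `f ∈ L¹(ℝ)` with `f ≥ 0` a.e. and `∫ f = 1`, and let `m` be a continuous linear
functional on `L^∞(ℝ)` invariant under convolution with `f`. Then `m` admits a Jordan
decomposition `m = m₊ - m₋` with `m₊, m₋` positive, invariant under convolution with `f`,
and `‖m‖ = ‖m₊‖ + ‖m₋‖`. -/
theorem jordan_decomposition_of_conv_invariant (f : ℝ → ℝ) (hf : Integrable f)
    (hfpos : ∀ᵐ x ∂(volume : Measure ℝ), 0 ≤ f x) (hfone : ∫ x, f x = 1)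
    (m : Lp ℝ ⊤ (volume : Measure ℝ) →L[ℝ] ℝ)
    (hinv : ∀ φ ψ : Lp ℝ ⊤ (volume : Measure ℝ),
        ⇑ψ =ᵐ[volume] (fun x => conv f (⇑φ) x) → m ψ = m φ) :
    ∃ mp mm : Lp ℝ ⊤ (volume : Measure ℝ) →L[ℝ] ℝ,
      (∀ φ : Lp ℝ ⊤ (volume : Measure ℝ), (0 : ℝ → ℝ) ≤ᵐ[volume] ⇑φ → 0 ≤ mp φ) ∧
      (∀ φ : Lp ℝ ⊤ (volume : Measure ℝ), (0 : ℝ → ℝ) ≤ᵐ[volume] ⇑φ → 0 ≤ mm φ) ∧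
      (∀ φ ψ : Lp ℝ ⊤ (volume : Measure ℝ),
        ⇑ψ =ᵐ[volume] (fun x => conv f (⇑φ) x) → mp ψ = mp φ) ∧
      (∀ φ ψ : Lp ℝ ⊤ (volume : Measure ℝ),
        ⇑ψ =ᵐ[volume] (fun x => conv f (⇑φ) x) → mm ψ = mm φ) ∧
      m = mp - mm ∧ ‖m‖ = ‖mp‖ + ‖mm‖ := by
  let T : Lp ℝ ⊤ (volume : Measure ℝ) →ₚ[ℝ] Lp ℝ ⊤ (volume : Measure ℝ) :=
    PositiveLinearMap.mk₀ (convLinfty hf) fun _ ↦ convLinfty_nonneg hf hfpos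
  have eq_T {φ ψ : Lp ℝ ⊤ (volume : Measure ℝ)} (h : ⇑ψ =ᵐ[volume] conv f φ) : ψ = T φ :=
    Lp.ext (h.trans (coeFn_convLinfty hf φ).symm)
  have hmT (φ) : m (T φ) = m φ := hinv φ _ (coeFn_convLinfty hf φ)
  have he := Lp.abs_le_norm_smul_oneTop (μ := (volume : Measure ℝ))
  have hmpT (φ) : m.positivePart (T φ) = m.positivePart φ :=
    m.positivePart_comp_eq T (convLinfty_oneTop hf hfone) hmT he φ
  refine ⟨m.positivePart, m.positivePart - m,
    fun φ hφ ↦ m.positivePart_nonneg ((Lp.coeFn_nonneg φ).1 hφ),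
    fun φ hφ ↦ sub_nonneg.2 (m.le_positivePart ((Lp.coeFn_nonneg φ).1 hφ)),
    fun φ ψ h ↦ eq_T h ▸ hmpT φ, fun φ ψ h ↦ ?_, (sub_sub_cancel _ _).symm,
    (m.norm_positivePart_add_norm_positivePart_sub Lp.oneTop_nonneg Lp.norm_oneTop_le he).symm⟩
  rw [eq_T h, sub_apply, sub_apply, hmpT, hmT]
end

section
/- Let φ : ℝ → ℝ be essentially bounded and measurable and α ∈ ℝ. Then φ is almost convergent to α if and only if lim_{θ→∞} (1/θ)∫_x^{x+θ} φ(t)dt = α uniformly in x ≥ 0; that is, for every ε > 0 there exists R ≥ 0 such that for all θ ≥ R and all x ≥ 0, |(1/θ)∫_x^{x+θ} φ(t)dt − α| ≤ ε. -/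
open MeasureTheory Filter

/-- `φ` is almost convergent (P-summable) to `α`: both
`limsup_{x→∞} (1/θ)∫_x^{x+θ} φ` and `liminf_{x→∞} (1/θ)∫_x^{x+θ} φ` tend to `α`
as `θ → ∞`. -/
def AlmostConvergentTo (φ : ℝ → ℝ) (α : ℝ) : Prop :=
  Tendsto (fun θ : ℝ =>
      limsup (fun x : ℝ => (1 / θ) * ∫ t in x..(x + θ), φ t) atTop) atTop (nhds α) ∧
  Tendsto (fun θ : ℝ =>
      liminf (fun x : ℝ => (1 / θ) * ∫ t in x..(x + θ), φ t) atTop) atTop (nhds α)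

set_option maxHeartbeats 1000000 in
/-- An essentially bounded measurable `φ` is almost convergent to `α` iff
`(1/θ)∫_x^{x+θ} φ(t) dt → α` as `θ → ∞` uniformly in `x ≥ 0`. -/
theorem almostConvergent_iff_uniform (φ : ℝ → ℝ) (hmeas : Measurable φ)
    (hbdd : MemLp φ ⊤ (volume : Measure ℝ)) (α : ℝ) :
    AlmostConvergentTo φ α ↔
      ∀ ε : ℝ, 0 < ε → ∃ R : ℝ, 0 ≤ R ∧ ∀ θ : ℝ, R ≤ θ → ∀ x : ℝ, 0 ≤ x →
        |(1 / θ) * (∫ t in x..(x + θ), φ t) - α| ≤ ε := by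
  -- Essential bound
  have hfin : eLpNormEssSup φ volume < ⊤ := by
    have := hbdd.2; rwa [eLpNorm_exponent_top] at this
  set M : ℝ := (eLpNormEssSup φ volume).toReal with hMdef
  have hM0 : 0 ≤ M := ENNReal.toReal_nonneg
  have hMae : ∀ᵐ t : ℝ, ‖φ t‖ ≤ M := by
    filter_upwards [ae_le_eLpNormEssSup (f := φ) (μ := volume)] with t ht
    have : ((‖φ t‖₊ : ENNReal)).toReal ≤ M := ENNReal.toReal_mono hfin.ne ht
    simpa using this
  -- interval integrability
  have hint : ∀ a b : ℝ, IntervalIntegrable φ volume a b := by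
    intro a b
    rw [intervalIntegrable_iff]
    refine Integrable.mono' (g := fun _ => M) ?_ (hmeas.aestronglyMeasurable.restrict) ?_
    · exact integrableOn_const measure_Ioc_lt_top.ne
    · exact ae_restrict_of_ae hMae
  -- basic integral bound
  have hIb : ∀ a b : ℝ, a ≤ b → |∫ t in a..b, φ t| ≤ M * (b - a) := by
    intro a b hab
    rw [intervalIntegral.integral_of_le hab]
    have h1 : |∫ t in Set.Ioc a b, φ t| ≤ ∫ t in Set.Ioc a b, |φ t| := by
      simpa [Real.norm_eq_abs] using
        norm_integral_le_integral_norm (μ := volume.restrict (Set.Ioc a b)) φ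
    have h2 : (∫ t in Set.Ioc a b, |φ t|) ≤ ∫ _t in Set.Ioc a b, M := by
      refine integral_mono_ae ?_ ?_ ?_
      · have := (hint a b); rw [intervalIntegrable_iff, Set.uIoc_of_le hab] at this
        exact this.norm
      · exact integrableOn_const measure_Ioc_lt_top.ne
      · exact ae_restrict_of_ae (hMae.mono fun t ht => by simpa [Real.norm_eq_abs] using ht)
    have h3 : (∫ _t in Set.Ioc a b, M) = M * (b - a) := by
      simp [Real.volume_Ioc, ENNReal.toReal_ofReal (sub_nonneg.2 hab), mul_comm, hab]
    linarith
  -- global bound on averages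
  have hAbd : ∀ θ : ℝ, 0 < θ → ∀ x : ℝ, |(1 / θ) * ∫ t in x..(x + θ), φ t| ≤ M := by
    intro θ hθ x
    rw [abs_mul, abs_of_nonneg (by positivity : (0:ℝ) ≤ 1 / θ)]
    have h1 := hIb x (x + θ) (by linarith)
    have h2 : (1 / θ) * |∫ t in x..(x + θ), φ t| ≤ (1 / θ) * (M * θ) := by
      have : M * (x + θ - x) = M * θ := by ring_nf
      rw [this] at h1
      exact mul_le_mul_of_nonneg_left h1 (by positivity)
    calc (1 / θ) * |∫ t in x..(x + θ), φ t| ≤ (1 / θ) * (M * θ) := h2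
      _ = M := by field_simp
  constructor
  · -- hard direction
    rintro ⟨h1, h2⟩ ε hε
    have hε3 : (0:ℝ) < ε / 3 := by positivity
    -- find one good θ
    have hev1 : ∀ᶠ θ : ℝ in atTop,
        limsup (fun x : ℝ => (1 / θ) * ∫ t in x..(x + θ), φ t) atTop < α + ε / 3 := by
      have := h1 (Iio_mem_nhds (show α < α + ε / 3 by linarith))
      simpa using this
    have hev2 : ∀ᶠ θ : ℝ in atTop,
        α - ε / 3 < liminf (fun x : ℝ => (1 / θ) * ∫ t in x..(x + θ), φ t) atTop := by
      have := h2 (Ioi_mem_nhds (show α - ε / 3 < α by linarith))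
      simpa using this
    obtain ⟨θ, ⟨hθls, hθli⟩, hθ1⟩ := ((hev1.and hev2).and (eventually_ge_atTop (1:ℝ))).exists
    have hθ0 : (0:ℝ) < θ := by linarith
    -- boundedness
    have hbdd_le : IsBoundedUnder (· ≤ ·) atTop
        (fun x : ℝ => (1 / θ) * ∫ t in x..(x + θ), φ t) :=
      ⟨M, eventually_map.mpr (Eventually.of_forall fun x => (abs_le.1 (hAbd θ hθ0 x)).2)⟩
    have hbdd_ge : IsBoundedUnder (· ≥ ·) atTop
        (fun x : ℝ => (1 / θ) * ∫ t in x..(x + θ), φ t) :=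
      ⟨-M, eventually_map.mpr (Eventually.of_forall fun x => (abs_le.1 (hAbd θ hθ0 x)).1)⟩
    have hup := eventually_lt_of_limsup_lt hθls hbdd_le
    have hlo := eventually_lt_of_lt_liminf hθli hbdd_ge
    obtain ⟨X₀, hX₀⟩ := ((hup.and hlo).and (eventually_ge_atTop (0:ℝ))).exists_forall_of_atTop
    set X : ℝ := max X₀ 0 with hXdef
    have hX0 : 0 ≤ X := le_max_right _ _
    have hX : ∀ y : ℝ, X ≤ y → |(∫ t in y..(y + θ), φ t) - θ * α| ≤ θ * (ε / 3) := by
      intro y hy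
      have h := hX₀ y (le_trans (le_max_left _ _) hy)
      have habs : |(1 / θ) * (∫ t in y..(y + θ), φ t) - α| ≤ ε / 3 := by
        rw [abs_le]; constructor <;> [linarith [h.1.2]; linarith [h.1.1]]
      have : (∫ t in y..(y + θ), φ t) - θ * α
          = θ * ((1 / θ) * (∫ t in y..(y + θ), φ t) - α) := by
        field_simp
      rw [this, abs_mul, abs_of_pos hθ0]
      exact mul_le_mul_of_nonneg_left habs hθ0.le
    -- multiples of θ
    have hmul : ∀ y : ℝ, X ≤ y → ∀ n : ℕ,
        |(∫ t in y..(y + (n : ℝ) * θ), φ t) - ((n : ℝ) * θ) * α| ≤ ((n : ℝ) * θ) * (ε / 3) := by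
      intro y hy n
      induction n with
      | zero => simp
      | succ n ih =>
        have hsplit : (∫ t in y..(y + (n : ℝ) * θ), φ t)
              + (∫ t in (y + (n : ℝ) * θ)..(y + ((n : ℝ) + 1) * θ), φ t)
            = ∫ t in y..(y + ((n : ℝ) + 1) * θ), φ t :=
          intervalIntegral.integral_add_adjacent_intervals (hint _ _) (hint _ _)
        have hbase : X ≤ y + (n : ℝ) * θ := by
          have : (0:ℝ) ≤ (n : ℝ) * θ := by positivity
          linarith
        have h2 := hX (y + (n : ℝ) * θ) hbase
        have heq : y + (n : ℝ) * θ + θ = y + ((n : ℝ) + 1) * θ := by ring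
        rw [heq] at h2
        have hcast : ((n + 1 : ℕ) : ℝ) = (n : ℝ) + 1 := by push_cast; ring
        rw [hcast]
        calc |(∫ t in y..(y + ((n : ℝ) + 1) * θ), φ t) - (((n : ℝ) + 1) * θ) * α|
            = |((∫ t in y..(y + (n : ℝ) * θ), φ t) - ((n : ℝ) * θ) * α)
              + ((∫ t in (y + (n : ℝ) * θ)..(y + ((n : ℝ) + 1) * θ), φ t) - θ * α)| := by
              rw [← hsplit]; ring_nf
          _ ≤ ((n : ℝ) * θ) * (ε / 3) + θ * (ε / 3) := (abs_add_le _ _).trans (by gcongr)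
          _ = (((n : ℝ) + 1) * θ) * (ε / 3) := by ring
    -- final assembly
    set C : ℝ := M * X + M * θ + |α| * (X + θ) with hCdef
    have hC0 : 0 ≤ C := by positivity
    refine ⟨max (X + θ) (3 * C / ε), le_trans (by linarith) (le_max_left _ _), ?_⟩
    intro Θ hΘ x hx
    have hΘ1 : X + θ ≤ Θ := le_trans (le_max_left _ _) hΘ
    have hΘ2 : 3 * C / ε ≤ Θ := le_trans (le_max_right _ _) hΘ
    have hΘ0 : 0 < Θ := by linarith
    set y : ℝ := max x X with hydef
    have hxy : x ≤ y := le_max_left _ _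
    have hXy : X ≤ y := le_max_right _ _
    have hyx : y - x ≤ X := by
      rcases le_total x X with h | h
      · simp [hydef, max_eq_right h]; linarith
      · simp [hydef, max_eq_left h]; linarith
    set Θ' : ℝ := x + Θ - y with hΘ'def
    have hΘ'θ : θ ≤ Θ' := by simp only [hΘ'def]; linarith
    have hΘ'0 : 0 < Θ' := by linarith
    set n : ℕ := ⌊Θ' / θ⌋₊ with hndef
    have hn1 : 1 ≤ Θ' / θ := (one_le_div hθ0).2 hΘ'θ
    have hnθ : (n : ℝ) * θ ≤ Θ' := by
      have := Nat.floor_le (le_trans zero_le_one hn1)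
      calc (n : ℝ) * θ ≤ (Θ' / θ) * θ := by
            exact mul_le_mul_of_nonneg_right this hθ0.le
        _ = Θ' := by field_simp
    have hnθ' : Θ' - (n : ℝ) * θ < θ := by
      have := Nat.lt_floor_add_one (Θ' / θ)
      have h2 : Θ' / θ * θ < ((n : ℝ) + 1) * θ := by
        exact mul_lt_mul_of_pos_right this hθ0
      rw [div_mul_cancel₀ _ hθ0.ne'] at h2
      linarith
    -- decompose the integral
    have hd1 : (∫ t in x..y, φ t) + (∫ t in y..(x + Θ), φ t) = ∫ t in x..(x + Θ), φ t :=
      intervalIntegral.integral_add_adjacent_intervals (hint _ _) (hint _ _)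
    have hd2 : (∫ t in y..(y + (n : ℝ) * θ), φ t)
          + (∫ t in (y + (n : ℝ) * θ)..(x + Θ), φ t) = ∫ t in y..(x + Θ), φ t :=
      intervalIntegral.integral_add_adjacent_intervals (hint _ _) (hint _ _)
    have hb1 : |∫ t in x..y, φ t| ≤ M * X := by
      have := hIb x y hxy
      have h2 : M * (y - x) ≤ M * X := mul_le_mul_of_nonneg_left hyx hM0
      linarith
    have hb2 := hmul y hXy n
    have hb3 : |∫ t in (y + (n : ℝ) * θ)..(x + Θ), φ t| ≤ M * θ := by
      have hle : y + (n : ℝ) * θ ≤ x + Θ := by simp only [hΘ'def] at hnθ; linarith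
      have := hIb _ _ hle
      have h2 : x + Θ - (y + (n : ℝ) * θ) = Θ' - (n : ℝ) * θ := by
        simp only [hΘ'def]; ring
      rw [h2] at this
      have h3 : M * (Θ' - (n : ℝ) * θ) ≤ M * θ := mul_le_mul_of_nonneg_left hnθ'.le hM0
      linarith
    have hΘnθ : Θ - (n : ℝ) * θ ≤ X + θ := by
      have : Θ' - (n : ℝ) * θ < θ := hnθ'
      simp only [hΘ'def] at this
      linarith
    have hΘnθ0 : 0 ≤ Θ - (n : ℝ) * θ := by
      have : (n : ℝ) * θ ≤ Θ' := hnθ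
      simp only [hΘ'def] at this
      linarith
    have hb4 : |(Θ - (n : ℝ) * θ) * α| ≤ |α| * (X + θ) := by
      rw [abs_mul, abs_of_nonneg hΘnθ0, mul_comm]
      exact mul_le_mul_of_nonneg_left hΘnθ (abs_nonneg _)
    have hnΘ : (n : ℝ) * θ ≤ Θ := by
      have : (n : ℝ) * θ ≤ Θ' := hnθ
      simp only [hΘ'def] at this; linarith
    have hkey : |(∫ t in x..(x + Θ), φ t) - Θ * α| ≤ Θ * (ε / 3) + C := by
      have hdecomp : (∫ t in x..(x + Θ), φ t) - Θ * α
          = (∫ t in x..y, φ t)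
            + ((∫ t in y..(y + (n : ℝ) * θ), φ t) - ((n : ℝ) * θ) * α)
            + (∫ t in (y + (n : ℝ) * θ)..(x + Θ), φ t)
            - (Θ - (n : ℝ) * θ) * α := by
        rw [← hd1, ← hd2]; ring
      rw [hdecomp]
      have hb2' : |(∫ t in y..(y + (n : ℝ) * θ), φ t) - ((n : ℝ) * θ) * α| ≤ Θ * (ε / 3) := by
        refine hb2.trans ?_
        exact mul_le_mul_of_nonneg_right hnΘ hε3.le
      calc |(∫ t in x..y, φ t)
            + ((∫ t in y..(y + (n : ℝ) * θ), φ t) - ((n : ℝ) * θ) * α)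
            + (∫ t in (y + (n : ℝ) * θ)..(x + Θ), φ t)
            - (Θ - (n : ℝ) * θ) * α|
          ≤ |∫ t in x..y, φ t|
            + |(∫ t in y..(y + (n : ℝ) * θ), φ t) - ((n : ℝ) * θ) * α|
            + |∫ t in (y + (n : ℝ) * θ)..(x + Θ), φ t|
            + |(Θ - (n : ℝ) * θ) * α| := by
              exact (abs_sub _ _).trans (by gcongr <;> exact abs_add_three _ _ _)
        _ ≤ M * X + Θ * (ε / 3) + M * θ + |α| * (X + θ) := by
              gcongr
        _ = Θ * (ε / 3) + C := by rw [hCdef]; ring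
    have heq0 : (1 / Θ) * (∫ t in x..(x + Θ), φ t) - α
        = (1 / Θ) * ((∫ t in x..(x + Θ), φ t) - Θ * α) := by
      field_simp
    rw [heq0, abs_mul, abs_of_pos (show (0:ℝ) < 1 / Θ by positivity)]
    have hCΘ : C / Θ ≤ ε / 3 := by
      rw [div_le_iff₀ hΘ0]
      have : 3 * C / ε * ε ≤ Θ * ε := mul_le_mul_of_nonneg_right hΘ2 hε.le
      rw [div_mul_cancel₀ _ hε.ne'] at this
      nlinarith
    calc (1 / Θ) * |(∫ t in x..(x + Θ), φ t) - Θ * α|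
        ≤ (1 / Θ) * (Θ * (ε / 3) + C) := by
          exact mul_le_mul_of_nonneg_left hkey (by positivity)
      _ = ε / 3 + C / Θ := by field_simp
      _ ≤ ε / 3 + ε / 3 := by linarith
      _ ≤ ε := by linarith
  · -- easy direction
    intro h
    have key : ∀ ε : ℝ, 0 < ε → ∀ᶠ θ : ℝ in atTop,
        |limsup (fun x : ℝ => (1 / θ) * ∫ t in x..(x + θ), φ t) atTop - α| ≤ ε / 2 ∧
        |liminf (fun x : ℝ => (1 / θ) * ∫ t in x..(x + θ), φ t) atTop - α| ≤ ε / 2 := by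
      intro ε hε
      obtain ⟨R, hR0, hR⟩ := h (ε / 2) (by positivity)
      filter_upwards [eventually_ge_atTop (max R 1)] with θ hθ
      have hθR : R ≤ θ := le_trans (le_max_left _ _) hθ
      have hθ1 : (1:ℝ) ≤ θ := le_trans (le_max_right _ _) hθ
      have hθ0 : (0:ℝ) < θ := by linarith
      have hev : ∀ᶠ x : ℝ in atTop,
          α - ε / 2 ≤ (1 / θ) * ∫ t in x..(x + θ), φ t ∧
          (1 / θ) * ∫ t in x..(x + θ), φ t ≤ α + ε / 2 := by
        filter_upwards [eventually_ge_atTop (0:ℝ)] with x hx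
        have := abs_le.1 (hR θ hθR x hx)
        exact ⟨by linarith [this.1], by linarith [this.2]⟩
      have hbdd_le : IsBoundedUnder (· ≤ ·) atTop
          (fun x : ℝ => (1 / θ) * ∫ t in x..(x + θ), φ t) :=
        ⟨M, eventually_map.mpr (Eventually.of_forall fun x => (abs_le.1 (hAbd θ hθ0 x)).2)⟩
      have hbdd_ge : IsBoundedUnder (· ≥ ·) atTop
          (fun x : ℝ => (1 / θ) * ∫ t in x..(x + θ), φ t) :=
        ⟨-M, eventually_map.mpr (Eventually.of_forall fun x => (abs_le.1 (hAbd θ hθ0 x)).1)⟩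
      constructor
      · rw [abs_le]
        constructor
        · have := le_limsup_of_frequently_le
            ((hev.mono fun x hx => hx.1).frequently) hbdd_le
          linarith
        · have := limsup_le_of_le hbdd_ge.isCoboundedUnder_le
            (hev.mono fun x hx => hx.2)
          linarith
      · rw [abs_le]
        constructor
        · have := le_liminf_of_le hbdd_le.isCoboundedUnder_ge
            (hev.mono fun x hx => hx.1)
          linarith
        · have := liminf_le_of_frequently_le
            ((hev.mono fun x hx => hx.2).frequently) hbdd_ge
          linarith
    constructor
    · rw [Metric.tendsto_atTop]
      intro ε hε
      obtain ⟨N, hN⟩ := ((key ε hε).and (eventually_ge_atTop (0:ℝ))).exists_forall_of_atTop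
      exact ⟨N, fun θ hθ => by
        have := (hN θ hθ).1.1
        rw [Real.dist_eq]
        linarith⟩
    · rw [Metric.tendsto_atTop]
      intro ε hε
      obtain ⟨N, hN⟩ := ((key ε hε).and (eventually_ge_atTop (0:ℝ))).exists_forall_of_atTop
      exact ⟨N, fun θ hθ => by
        have := (hN θ hθ).1.2
        rw [Real.dist_eq]
        linarith⟩
end

section
/- Let f ∈ L¹(ℝ) with ∫_ℝ f(x)dx = 1 and let φ : ℝ → ℝ be essentially bounded and measurable. If (f⋆φ)(x) → α as x → ∞, then φ is almost convergent to α. -/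
/-!
Let `W_θ(x) = ∫_x^{x+θ} φ`. Integrating `f⋆φ` over a window of length `θ` gives `f⋆W_θ`, which
tends to `θα`. Since `|W_θ(x - t) - W_θ(x)| ≤ 2‖φ‖_∞ min(θ, |t|)` and `∫ f = 1`, `f⋆W_θ`
differs from `W_θ` uniformly by at most `2‖φ‖_∞ ∫ min(θ, |t|) |f(t)| dt`, which is `o(θ)` by
dominated convergence. So the limsup and liminf of `W_θ(x)/θ` are within `o(1)` of `α`.
-/

open MeasureTheory Filter

open Set Topology

noncomputable def windowIntegral (ψ : ℝ → ℝ) (θ x : ℝ) : ℝ := ∫ u in x..x + θ, ψ u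

theorem locallyIntegrable_of_norm_le {X E : Type*} [MeasurableSpace X] [TopologicalSpace X]
    [NormedAddCommGroup E] {μ : Measure X} [IsLocallyFiniteMeasure μ] {f : X → E} {M : ℝ}
    (hf : AEStronglyMeasurable f μ) (hfM : ∀ x, ‖f x‖ ≤ M) : LocallyIntegrable f μ :=
  (memLp_top_of_bound hf M (.of_forall hfM)).locallyIntegrable le_top

theorem MeasureTheory.LocallyIntegrable.intervalIntegrable {E : Type*} [NormedAddCommGroup E]
    {μ : Measure ℝ} [IsLocallyFiniteMeasure μ] {f : ℝ → E} (hf : LocallyIntegrable f μ)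
    (a b : ℝ) : IntervalIntegrable f μ a b :=
  (hf.integrableOn_isCompact isCompact_uIcc).intervalIntegrable

theorem tendsto_windowIntegral {F : ℝ → ℝ} {α : ℝ} (hF : LocallyIntegrable F)
    (h : Tendsto F atTop (𝓝 α)) (θ : ℝ) :
    Tendsto (windowIntegral F θ) atTop (𝓝 (θ * α)) := by
  rw [Metric.tendsto_atTop] at h ⊢
  intro ε hε
  obtain ⟨X, hX⟩ := h (ε / (|θ| + 1)) (by positivity)
  refine ⟨X + |θ|, fun x hx => ?_⟩
  have hsub : windowIntegral F θ x - θ * α = ∫ y in x..x + θ, (F y - α) := by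
    rw [intervalIntegral.integral_sub (hF.intervalIntegrable _ _) intervalIntegrable_const,
      intervalIntegral.integral_const, windowIntegral, add_sub_cancel_left, smul_eq_mul]
  have hclose : ∀ y ∈ uIoc x (x + θ), ‖F y - α‖ ≤ ε / (|θ| + 1) := fun y hy => by
    refine (hX y ?_).le
    rcases min_lt_iff.1 hy.1 with hy' | hy' <;> linarith [neg_abs_le θ, abs_nonneg θ]
  rw [Real.dist_eq, hsub]
  calc |∫ y in x..x + θ, (F y - α)| ≤ ε / (|θ| + 1) * |x + θ - x| :=
        intervalIntegral.norm_integral_le_of_norm_le_const hclose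
    _ < ε := by
      rw [add_sub_cancel_left, div_mul_eq_mul_div, div_lt_iff₀ (by positivity)]
      linarith

section WindowIntegral

variable {ψ : ℝ → ℝ} {M : ℝ}

theorem continuous_windowIntegral (hψ : LocallyIntegrable ψ) (θ : ℝ) :
    Continuous (windowIntegral ψ θ) := by
  have hprim := intervalIntegral.continuous_primitive hψ.intervalIntegrable 0
  have h : windowIntegral ψ θ = fun x => (∫ u in 0..x + θ, ψ u) - ∫ u in 0..x, ψ u := by
    ext x
    rw [windowIntegral, intervalIntegral.integral_interval_sub_left
      (hψ.intervalIntegrable _ _) (hψ.intervalIntegrable _ _)]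
  rw [h]
  exact (hprim.comp (continuous_add_const θ)).sub hprim

theorem abs_intervalIntegral_le (hψM : ∀ u, |ψ u| ≤ M) (a b : ℝ) :
    |∫ u in a..b, ψ u| ≤ M * |b - a| :=
  intervalIntegral.norm_integral_le_of_norm_le_const (f := ψ) fun u _ => hψM u

theorem abs_windowIntegral_le (hψM : ∀ u, |ψ u| ≤ M) (θ x : ℝ) :
    |windowIntegral ψ θ x| ≤ M * |θ| := by
  simpa [windowIntegral] using abs_intervalIntegral_le hψM x (x + θ)

theorem abs_windowIntegral_sub_le (hψ : Measurable ψ) (hψM : ∀ u, |ψ u| ≤ M) {θ : ℝ}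
    (hθ : 0 ≤ θ) (x t : ℝ) :
    |windowIntegral ψ θ (x - t) - windowIntegral ψ θ x| ≤ 2 * M * min θ |t| := by
  have hM : 0 ≤ M := (abs_nonneg _).trans (hψM 0)
  have hint : ∀ a b, IntervalIntegrable ψ volume a b :=
    (locallyIntegrable_of_norm_le hψ.aestronglyMeasurable hψM).intervalIntegrable
  rw [mul_min_of_nonneg _ _ (by positivity), le_min_iff]
  constructor
  · calc _ ≤ |windowIntegral ψ θ (x - t)| + |windowIntegral ψ θ x| := abs_sub _ _
      _ ≤ M * |θ| + M * |θ| := add_le_add (abs_windowIntegral_le hψM _ _)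
          (abs_windowIntegral_le hψM _ _)
      _ = 2 * M * θ := by rw [abs_of_nonneg hθ]; ring
  · rw [windowIntegral, windowIntegral, intervalIntegral.integral_interval_sub_interval_comm
      (hint _ _) (hint _ _) (hint _ _)]
    calc _ ≤ |∫ u in x - t..x, ψ u| + |∫ u in x - t + θ..x + θ, ψ u| := abs_sub _ _
      _ ≤ M * |x - (x - t)| + M * |x + θ - (x - t + θ)| :=
          add_le_add (abs_intervalIntegral_le hψM _ _) (abs_intervalIntegral_le hψM _ _)
      _ = 2 * M * |t| := by ring_nf

end WindowIntegral

section Convolution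

variable {g ψ : ℝ → ℝ} {M : ℝ}

theorem abs_conv_le (hg : Integrable g) (hψM : ∀ u, |ψ u| ≤ M) (x : ℝ) :
    |conv g ψ x| ≤ M * ∫ t, |g t| := by
  calc |conv g ψ x| ≤ ∫ t, |ψ (x - t) * g t| := abs_integral_le_integral_abs
    _ ≤ ∫ t, M * |g t| := by
      refine integral_mono_of_nonneg (.of_forall fun t => abs_nonneg _) (hg.abs.const_mul M)
        (.of_forall fun t => ?_)
      dsimp only
      rw [abs_mul]
      exact mul_le_mul_of_nonneg_right (hψM _) (abs_nonneg _)
    _ = M * ∫ t, |g t| := integral_const_mul M _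

theorem aestronglyMeasurable_conv (hg : AEStronglyMeasurable g) (hψ : Measurable ψ) :
    AEStronglyMeasurable (conv g ψ) :=
  ((hψ.comp measurable_sub).aestronglyMeasurable.mul hg.comp_snd).integral_prod_right'

theorem integrable_min_abs_mul (hg : Integrable g) {θ : ℝ} (hθ : 0 ≤ θ) :
    Integrable fun t => min θ |t| * |g t| :=
  hg.abs.bdd_mul (continuous_const.min continuous_abs).aestronglyMeasurable
    (.of_forall fun t => by
      rw [Real.norm_eq_abs, abs_of_nonneg (le_min hθ (abs_nonneg t))]
      exact min_le_left _ _)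

theorem windowIntegral_conv (hg : Integrable g) (hψ : Measurable ψ) (hψM : ∀ u, |ψ u| ≤ M)
    {θ : ℝ} (hθ : 0 ≤ θ) (x : ℝ) :
    windowIntegral (conv g ψ) θ x = conv g (windowIntegral ψ θ) x := by
  have hint : Integrable (Function.uncurry fun y t => ψ (y - t) * g t)
      ((volume.restrict (Ioc x (x + θ))).prod volume) := by
    refine ((integrableOn_const (C := M) measure_Ioc_lt_top.ne).mul_prod hg.abs).mono' ?_
      (.of_forall fun p => ?_)
    · exact (hψ.comp measurable_sub).aestronglyMeasurable.mul hg.aestronglyMeasurable.comp_snd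
    · show |ψ (p.1 - p.2) * g p.2| ≤ M * |g p.2|
      rw [abs_mul]
      exact mul_le_mul_of_nonneg_right (hψM _) (abs_nonneg _)
  rw [windowIntegral, intervalIntegral.integral_of_le (by linarith)]
  refine (integral_integral_swap hint).trans (integral_congr_ae (.of_forall fun t => ?_))
  dsimp only
  rw [integral_mul_const, ← intervalIntegral.integral_of_le (by linarith),
    intervalIntegral.integral_comp_sub_right, windowIntegral, sub_add_eq_add_sub]

theorem abs_conv_windowIntegral_sub_le (hg : Integrable g) (hg1 : ∫ t, g t = 1)
    (hψ : Measurable ψ) (hψM : ∀ u, |ψ u| ≤ M) {θ : ℝ} (hθ : 0 ≤ θ) (x : ℝ) :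
    |conv g (windowIntegral ψ θ) x - windowIntegral ψ θ x| ≤
      2 * M * ∫ t, min θ |t| * |g t| := by
  set W := windowIntegral ψ θ
  have hW : Continuous W :=
    continuous_windowIntegral (locallyIntegrable_of_norm_le hψ.aestronglyMeasurable hψM) θ
  have hWg : Integrable fun t => W (x - t) * g t :=
    hg.bdd_mul (hW.comp (continuous_sub_left x)).aestronglyMeasurable
      (.of_forall fun t => abs_windowIntegral_le hψM θ _)
  have hdiff : conv g W x - W x = ∫ t, (W (x - t) - W x) * g t := by
    simp_rw [sub_mul]
    rw [integral_sub hWg (hg.const_mul _), integral_const_mul, hg1, mul_one, conv]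
  calc |conv g W x - W x| = |∫ t, (W (x - t) - W x) * g t| := by rw [hdiff]
    _ ≤ ∫ t, |(W (x - t) - W x) * g t| := abs_integral_le_integral_abs
    _ ≤ ∫ t, 2 * M * (min θ |t| * |g t|) := by
      refine integral_mono_of_nonneg (.of_forall fun _ => abs_nonneg _)
        ((integrable_min_abs_mul hg hθ).const_mul _) (.of_forall fun t => ?_)
      dsimp only
      rw [abs_mul, ← mul_assoc]
      exact mul_le_mul_of_nonneg_right (abs_windowIntegral_sub_le hψ hψM hθ x t) (abs_nonneg _)
    _ = 2 * M * ∫ t, min θ |t| * |g t| := integral_const_mul _ _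

theorem tendsto_integral_min_abs_mul_div (hg : Integrable g) :
    Tendsto (fun θ => (∫ t, min θ |t| * |g t|) / θ) atTop (𝓝 0) := by
  simp_rw [← integral_div]
  rw [← integral_zero ℝ ℝ]
  refine tendsto_integral_filter_of_dominated_convergence (fun t => |g t|) ?_ ?_ hg.abs
    (.of_forall fun t => ?_)
  · filter_upwards [eventually_ge_atTop 0] with θ hθ
    exact ((integrable_min_abs_mul hg hθ).div_const θ).aestronglyMeasurable
  · filter_upwards [eventually_gt_atTop 0] with θ hθ
    refine .of_forall fun t => ?_
    rw [Real.norm_eq_abs, abs_of_nonneg (by positivity), div_le_iff₀ hθ, mul_comm _ θ]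
    exact mul_le_mul_of_nonneg_right (min_le_left _ _) (abs_nonneg _)
  · refine ((tendsto_const_nhds (x := |t| * |g t|)).div_atTop tendsto_id).congr' ?_
    filter_upwards [eventually_ge_atTop |t|] with θ hθ
    rw [min_eq_right hθ, id]

end Convolution

section LimsupLiminf

variable {ι κ : Type*} {l : Filter ι} {l' : Filter κ} [l'.NeBot]

theorem abs_liminf_sub_le_and_abs_limsup_sub_le {u v : κ → ℝ} {α r : ℝ}
    (hv : Tendsto v l' (𝓝 α)) (huv : ∀ x, |u x - v x| ≤ r) :
    |liminf u l' - α| ≤ r ∧ |limsup u l' - α| ≤ r := by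
  have hup : ∀ x, u x ≤ v x + r := fun x => by linarith [(abs_le.1 (huv x)).2]
  have hlow : ∀ x, v x - r ≤ u x := fun x => by linarith [(abs_le.1 (huv x)).1]
  have hu_le : IsBoundedUnder (· ≤ ·) l' u :=
    (hv.add_const r).isBoundedUnder_le.mono_le (.of_forall hup)
  have hu_ge : IsBoundedUnder (· ≥ ·) l' u :=
    (hv.sub_const r).isBoundedUnder_ge.mono_ge (.of_forall hlow)
  have hlimsup : limsup u l' ≤ α + r :=
    (limsup_le_limsup (.of_forall hup) hu_ge.isCoboundedUnder_le
      (hv.add_const r).isBoundedUnder_le).trans_eq (hv.add_const r).limsup_eq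
  have hliminf : α - r ≤ liminf u l' :=
    (hv.sub_const r).liminf_eq.symm.trans_le
      (liminf_le_liminf (.of_forall hlow) (hv.sub_const r).isBoundedUnder_ge
        hu_le.isCoboundedUnder_ge)
  have hmid : liminf u l' ≤ limsup u l' := liminf_le_limsup hu_le hu_ge
  constructor <;> rw [abs_le] <;> constructor <;> linarith

theorem tendsto_limsup_liminf_of_abs_sub_le {u v : ι → κ → ℝ} {ε : ι → ℝ} {α : ℝ}
    (hε : Tendsto ε l (𝓝 0))
    (h : ∀ᶠ i in l, Tendsto (v i) l' (𝓝 α) ∧ ∀ x, |u i x - v i x| ≤ ε i) :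
    Tendsto (fun i => limsup (u i) l') l (𝓝 α) ∧
      Tendsto (fun i => liminf (u i) l') l (𝓝 α) := by
  have key := h.mono fun i hi => abs_liminf_sub_le_and_abs_limsup_sub_le hi.1 hi.2
  exact ⟨tendsto_iff_norm_sub_tendsto_zero.2 <|
      squeeze_zero' (.of_forall fun _ => norm_nonneg _) (key.mono fun _ hi => hi.2) hε,
    tendsto_iff_norm_sub_tendsto_zero.2 <|
      squeeze_zero' (.of_forall fun _ => norm_nonneg _) (key.mono fun _ hi => hi.1) hε⟩

end LimsupLiminf

theorem almostConvergentTo_of_conv_tendsto_of_abs_le {g ψ : ℝ → ℝ} {M α : ℝ}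
    (hg : Integrable g) (hg1 : ∫ t, g t = 1) (hψ : Measurable ψ) (hψM : ∀ u, |ψ u| ≤ M)
    (hconv : Tendsto (conv g ψ) atTop (𝓝 α)) : AlmostConvergentTo ψ α := by
  have hF : LocallyIntegrable (conv g ψ) :=
    locallyIntegrable_of_norm_le (aestronglyMeasurable_conv hg.aestronglyMeasurable hψ)
      (abs_conv_le hg hψM)
  have hε := (tendsto_integral_min_abs_mul_div hg).const_mul (2 * M)
  rw [mul_zero] at hε
  refine tendsto_limsup_liminf_of_abs_sub_le
    (v := fun θ x => 1 / θ * conv g (windowIntegral ψ θ) x) hε ?_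
  filter_upwards [eventually_gt_atTop 0] with θ hθ
  refine ⟨?_, fun x => ?_⟩
  · have hlim := (tendsto_windowIntegral hF hconv θ).const_mul (1 / θ)
    rw [← mul_assoc, one_div_mul_cancel hθ.ne', one_mul] at hlim
    exact hlim.congr fun x => by rw [windowIntegral_conv hg hψ hψM hθ.le]
  · calc |1 / θ * windowIntegral ψ θ x - 1 / θ * conv g (windowIntegral ψ θ) x|
        = 1 / θ * |conv g (windowIntegral ψ θ) x - windowIntegral ψ θ x| := by
          rw [← mul_sub, abs_mul, abs_of_pos (one_div_pos.2 hθ), abs_sub_comm]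
      _ ≤ 1 / θ * (2 * M * ∫ t, min θ |t| * |g t|) := by
          gcongr
          exact abs_conv_windowIntegral_sub_le hg hg1 hψ hψM hθ.le x
      _ = 2 * M * ((∫ t, min θ |t| * |g t|) / θ) := by ring

theorem MeasureTheory.MemLp.exists_measurable_abs_le_ae_eq {X : Type*} [MeasurableSpace X]
    {μ : Measure X} {φ : X → ℝ} (hφ : MemLp φ ⊤ μ) :
    ∃ ψ : X → ℝ, ∃ M, Measurable ψ ∧ (∀ u, |ψ u| ≤ M) ∧ ψ =ᵐ[μ] φ := by
  obtain ⟨C, hC⟩ := eLpNormEssSup_lt_top_iff_isBoundedUnder.1 (by simpa using hφ.2)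
  set φ' := hφ.1.mk φ
  have hbound : ∀ᵐ u ∂μ, |φ' u| ≤ C := by
    filter_upwards [eventually_map.1 hC, hφ.1.ae_eq_mk] with u hu hφu
    rw [show φ' u = φ u from hφu.symm, ← Real.norm_eq_abs, ← coe_nnnorm]
    exact_mod_cast hu
  refine ⟨{u | |φ' u| ≤ C}.indicator φ', C,
    hφ.1.stronglyMeasurable_mk.measurable.indicator
      (measurableSet_le hφ.1.stronglyMeasurable_mk.measurable.abs measurable_const),
    fun u => ?_, ?_⟩
  · by_cases hu : |φ' u| ≤ C
    · simp [indicator_of_mem, hu]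
    · simp [indicator_of_notMem, hu]
  · filter_upwards [hbound, hφ.1.ae_eq_mk] with u hu hφu
    rw [indicator_of_mem (show u ∈ {u | |φ' u| ≤ C} from hu), hφu]

theorem conv_congr_ae_right {f ψ φ : ℝ → ℝ} (h : ψ =ᵐ[volume] φ) : conv f ψ = conv f φ := by
  ext x
  refine integral_congr_ae ?_
  filter_upwards [(quasiMeasurePreserving_sub_left volume x).ae_eq h] with t ht
  exact congrArg (· * f t) ht

theorem almostConvergentTo_congr_ae {ψ φ : ℝ → ℝ} {α : ℝ} (h : ψ =ᵐ[volume] φ) :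
    AlmostConvergentTo ψ α ↔ AlmostConvergentTo φ α := by
  have hW : ∀ θ x : ℝ, ∫ t in x..(x + θ), ψ t = ∫ t in x..(x + θ), φ t := fun θ x =>
    intervalIntegral.integral_congr_ae (h.mono fun t ht _ => ht)
  simp only [AlmostConvergentTo, hW]

theorem almostConvergent_of_conv_tendsto_general (f : ℝ → ℝ) (hf : Integrable f)
    (hfone : ∫ x, f x = 1)
    (φ : ℝ → ℝ) (hbdd : MemLp φ ⊤ (volume : Measure ℝ))
    (α : ℝ) (hconv : Tendsto (fun x => conv f φ x) atTop (nhds α)) :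
    AlmostConvergentTo φ α := by
  obtain ⟨ψ, M, hψ, hψM, hψφ⟩ := hbdd.exists_measurable_abs_le_ae_eq
  rw [← conv_congr_ae_right hψφ] at hconv
  rw [← almostConvergentTo_congr_ae hψφ]
  exact almostConvergentTo_of_conv_tendsto_of_abs_le hf hfone hψ hψM hconv

/-- Abelian theorem: if `f ∈ L¹(ℝ)` with `∫ f = 1` and `(f⋆φ)(x) → α` as `x → ∞`, then
`φ` is almost convergent to `α`. -/
theorem almostConvergent_of_conv_tendsto (f : ℝ → ℝ) (hf : Integrable f)
    (hfone : ∫ x, f x = 1)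
    (φ : ℝ → ℝ) (hmeas : Measurable φ) (hbdd : MemLp φ ⊤ (volume : Measure ℝ))
    (α : ℝ) (hconv : Tendsto (fun x => conv f φ x) atTop (nhds α)) :
    AlmostConvergentTo φ α :=
  almostConvergent_of_conv_tendsto_general f hf hfone φ hbdd α hconv
end

section
/- Let φ ∈ ℓ∞ and α ∈ ℝ. If φ is C_∞ summable to α — i.e., both limsup_{n→∞} (C^kφ)(n) → α and liminf_{n→∞} (C^kφ)(n) → α as k → ∞ — then φ is summable to α by the logarithmic method: (1/log n) Σ_{i=1}^n φ(i)/i → α as n → ∞. -/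
/-!
Write `L ψ n = (log n)⁻¹ ∑_{i ≤ n} ψ(i)/i` for the logarithmic mean. Exchanging the order of
summation, `∑_{i ≤ n} (Cψ)(i)/i = ∑_{j ≤ n} ψ(j) ∑_{i=j}^n i⁻²`, and the inner sum is
`j⁻¹ + O(j⁻² + n⁻¹)`; hence the two sums `∑ ψ(i)/i` and `∑ (Cψ)(i)/i` differ by `O(‖ψ‖∞)`, and
`L ψ - L (Cψ) → 0`. Iterating, `L φ - L (Cᵏφ) → 0` for every `k`. Since `L` is a regular method
(`ψ ≤ c` eventually gives `limsup L ψ ≤ c`), `limsup L φ ≤ limsup Cᵏφ` for every `k`, which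
tends to `α`; the bound for the `liminf` follows by applying this to `-φ`.
-/

open Filter

noncomputable def cesaro (φ : ℕ → ℝ) (n : ℕ) : ℝ :=
  (1 / (n : ℝ)) * ∑ i ∈ Finset.Icc 1 n, φ i

open Finset Topology

lemma sum_Icc_inv_sq_bounds {j : ℕ} (hj : 1 ≤ j) {n : ℕ} (hjn : j ≤ n) :
    (j : ℝ)⁻¹ - ((n : ℝ) + 1)⁻¹ ≤ ∑ i ∈ Icc j n, ((i : ℝ) ^ 2)⁻¹ ∧
      ∑ i ∈ Icc j n, ((i : ℝ) ^ 2)⁻¹ ≤ ((j : ℝ) ^ 2)⁻¹ + (j : ℝ)⁻¹ - (n : ℝ)⁻¹ := by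
  induction n, hjn using Nat.le_induction with
  | base =>
    have : (1 : ℝ) ≤ j := by exact_mod_cast hj
    simp only [Icc_self, sum_singleton, add_sub_cancel_right, le_refl, and_true]
    rw [inv_sub_inv (by positivity) (by positivity), div_le_iff₀ (by positivity)]
    field_simp
    nlinarith
  | succ n hjn ih =>
    have : (1 : ℝ) ≤ n := by exact_mod_cast hj.trans hjn
    rw [sum_Icc_succ_top (by omega)]
    push_cast
    constructor
    · have : ((n : ℝ) + 1)⁻¹ - ((n : ℝ) + 1 + 1)⁻¹ ≤ (((n : ℝ) + 1) ^ 2)⁻¹ := by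
        rw [inv_sub_inv (by positivity) (by positivity), div_le_iff₀ (by positivity)]
        field_simp
        nlinarith
      linarith [ih.1]
    · have : (((n : ℝ) + 1) ^ 2)⁻¹ ≤ (n : ℝ)⁻¹ - ((n : ℝ) + 1)⁻¹ := by
        rw [inv_sub_inv (by positivity) (by positivity), le_div_iff₀ (by positivity)]
        field_simp
        nlinarith
      linarith [ih.2]

lemma abs_inv_sub_sum_Icc_inv_sq_le {j : ℕ} (hj : 1 ≤ j) {n : ℕ} (hjn : j ≤ n) :
    |(j : ℝ)⁻¹ - ∑ i ∈ Icc j n, ((i : ℝ) ^ 2)⁻¹| ≤ ((j : ℝ) ^ 2)⁻¹ + (n : ℝ)⁻¹ := by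
  obtain ⟨hlow, hup⟩ := sum_Icc_inv_sq_bounds hj hjn
  have : ((n : ℝ) + 1)⁻¹ ≤ (n : ℝ)⁻¹ := inv_anti₀ (Nat.cast_pos.2 (hj.trans hjn)) (by linarith)
  have : 0 ≤ ((j : ℝ) ^ 2)⁻¹ := by positivity
  have : 0 ≤ (n : ℝ)⁻¹ := by positivity
  rw [abs_le]
  constructor <;> linarith

lemma sum_Icc_inv_sq_le_two (n : ℕ) : ∑ j ∈ Icc 1 n, ((j : ℝ) ^ 2)⁻¹ ≤ 2 := by
  have : Icc 1 n = Ioo 0 (n + 1) := by ext; simp; omega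
  simpa [this] using sum_Ioo_inv_sq_le (α := ℝ) 0 (n + 1)

section Cesaro

lemma cesaro_neg (φ : ℕ → ℝ) : cesaro (-φ) = -cesaro φ := by
  ext n
  simp [cesaro]

lemma iterate_cesaro_neg (φ : ℕ → ℝ) (k : ℕ) : cesaro^[k] (-φ) = -cesaro^[k] φ :=
  Function.Commute.iterate_left (f := cesaro) (g := Neg.neg) cesaro_neg k φ

variable {ψ : ℕ → ℝ} {M α c : ℝ}

lemma abs_cesaro_le (hψ : ∀ n, |ψ n| ≤ M) (n : ℕ) : |cesaro ψ n| ≤ M := by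
  have hM : 0 ≤ M := (abs_nonneg _).trans (hψ 0)
  have hsum : |∑ i ∈ Icc 1 n, ψ i| ≤ n * M := by
    simpa using
      (abs_sum_le_sum_abs ψ (Icc 1 n)).trans (sum_le_card_nsmul _ _ M fun i _ => hψ i)
  rcases n.eq_zero_or_pos with rfl | hn
  · simpa [cesaro] using hM
  · rw [cesaro, abs_mul, abs_of_nonneg (by positivity), one_div,
      inv_mul_le_iff₀ (by positivity)]
    exact hsum

lemma abs_iterate_cesaro_le (hψ : ∀ n, |ψ n| ≤ M) (k n : ℕ) : |cesaro^[k] ψ n| ≤ M := by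
  induction k generalizing n with
  | zero => exact hψ n
  | succ k ih =>
    rw [Function.iterate_succ_apply']
    exact abs_cesaro_le ih n

lemma exists_iterate_cesaro_eventually_le (hψ : ∀ n, |ψ n| ≤ M)
    (h : Tendsto (fun k => limsup (fun n => cesaro^[k] ψ n) atTop) atTop (𝓝 α)) (hc : α < c) :
    ∃ k, ∀ᶠ n in atTop, cesaro^[k] ψ n ≤ c := by
  obtain ⟨k, hk⟩ := (h.eventually (gt_mem_nhds hc)).exists
  refine ⟨k, (eventually_lt_of_limsup_lt hk ?_).mono fun _ => le_of_lt⟩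
  exact isBoundedUnder_of_eventually_le
    (.of_forall fun n => (abs_le.1 (abs_iterate_cesaro_le hψ k n)).2)

lemma exists_iterate_cesaro_eventually_ge (hψ : ∀ n, |ψ n| ≤ M)
    (h : Tendsto (fun k => liminf (fun n => cesaro^[k] ψ n) atTop) atTop (𝓝 α)) (hc : c < α) :
    ∃ k, ∀ᶠ n in atTop, c ≤ cesaro^[k] ψ n := by
  obtain ⟨k, hk⟩ := (h.eventually (lt_mem_nhds hc)).exists
  refine ⟨k, (eventually_lt_of_lt_liminf hk ?_).mono fun _ => le_of_lt⟩
  exact isBoundedUnder_of_eventually_ge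
    (.of_forall fun n => (abs_le.1 (abs_iterate_cesaro_le hψ k n)).1)

lemma sum_cesaro_div_eq (ψ : ℕ → ℝ) (n : ℕ) :
    ∑ i ∈ Icc 1 n, cesaro ψ i / i = ∑ j ∈ Icc 1 n, ψ j * ∑ i ∈ Icc j n, ((i : ℝ) ^ 2)⁻¹ := by
  simp only [cesaro, mul_sum, sum_div]
  rw [sum_comm' (t' := Icc 1 n) (s' := fun j => Icc j n)]
  · exact sum_congr rfl fun j _ => sum_congr rfl fun i _ => by ring
  · intro i j
    simp only [mem_Icc]
    omega

lemma abs_sum_div_sub_sum_cesaro_div_le (hψ : ∀ n, |ψ n| ≤ M) (n : ℕ) :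
    |∑ i ∈ Icc 1 n, ψ i / i - ∑ i ∈ Icc 1 n, cesaro ψ i / i| ≤ 3 * M := by
  have hM : 0 ≤ M := (abs_nonneg _).trans (hψ 0)
  have hn : ∑ _j ∈ Icc 1 n, (n : ℝ)⁻¹ ≤ 1 := by
    rw [sum_const, Nat.card_Icc, nsmul_eq_mul, Nat.add_sub_cancel]
    exact mul_inv_le_one
  calc |∑ i ∈ Icc 1 n, ψ i / i - ∑ i ∈ Icc 1 n, cesaro ψ i / i|
      = |∑ j ∈ Icc 1 n, ψ j * ((j : ℝ)⁻¹ - ∑ i ∈ Icc j n, ((i : ℝ) ^ 2)⁻¹)| := by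
        rw [sum_cesaro_div_eq, ← sum_sub_distrib]
        simp only [mul_sub, div_eq_mul_inv]
    _ ≤ ∑ j ∈ Icc 1 n, M * (((j : ℝ) ^ 2)⁻¹ + (n : ℝ)⁻¹) := by
        refine (abs_sum_le_sum_abs _ _).trans (sum_le_sum fun j hj => ?_)
        rw [mem_Icc] at hj
        rw [abs_mul]
        exact mul_le_mul (hψ j) (abs_inv_sub_sum_Icc_inv_sq_le hj.1 hj.2) (abs_nonneg _) hM
    _ ≤ M * (2 + 1) := by
        rw [← mul_sum, sum_add_distrib]
        exact mul_le_mul_of_nonneg_left (add_le_add (sum_Icc_inv_sq_le_two n) hn) hM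
    _ = 3 * M := by ring

end Cesaro

section LogMean

noncomputable def logMean (ψ : ℕ → ℝ) (n : ℕ) : ℝ :=
  (1 / Real.log (n : ℝ)) * ∑ i ∈ Icc 1 n, ψ i / (i : ℝ)

lemma tendsto_one_div_log_natCast : Tendsto (fun n : ℕ => 1 / Real.log n) atTop (𝓝 0) := by
  simp only [one_div]
  exact (Real.tendsto_log_atTop.comp tendsto_natCast_atTop_atTop).inv_tendsto_atTop

lemma logMean_neg (ψ : ℕ → ℝ) : logMean (-ψ) = -logMean ψ := by
  ext n
  simp [logMean, neg_div]

lemma logMean_eq_logMean_sub_add (ψ : ℕ → ℝ) (c : ℝ) (n : ℕ) :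
    logMean ψ n = logMean (fun i => ψ i - c) n + c * logMean (fun _ => 1) n := by
  simp only [logMean, mul_sum, ← sum_add_distrib]
  exact sum_congr rfl fun i _ => by ring

lemma tendsto_logMean_one : Tendsto (logMean fun _ => 1) atTop (𝓝 1) := by
  have hγ := (tendsto_const_nhds (x := (1 : ℝ))).add
    (Real.tendsto_harmonic_sub_log.mul tendsto_one_div_log_natCast)
  rw [mul_zero, add_zero] at hγ
  refine hγ.congr' ?_
  filter_upwards [eventually_gt_atTop 1] with n hn
  have : Real.log n ≠ 0 := (Real.log_pos (by exact_mod_cast hn)).ne'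
  simp only [logMean, harmonic_eq_sum_Icc, one_div]
  push_cast
  field_simp
  ring

variable {ψ : ℕ → ℝ} {M : ℝ}

lemma tendsto_logMean_sub_logMean_cesaro (hψ : ∀ n, |ψ n| ≤ M) :
    Tendsto (logMean ψ - logMean (cesaro ψ)) atTop (𝓝 0) := by
  have hlim := tendsto_one_div_log_natCast.const_mul (3 * M)
  rw [mul_zero] at hlim
  refine squeeze_zero_norm (fun n => ?_) hlim
  have hlog : 0 ≤ 1 / Real.log n := one_div_nonneg.2 (Real.log_natCast_nonneg n)
  rw [Pi.sub_apply, logMean, logMean, ← mul_sub, norm_mul, Real.norm_of_nonneg hlog, mul_comm]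
  exact mul_le_mul_of_nonneg_right (abs_sum_div_sub_sum_cesaro_div_le hψ n) hlog

lemma tendsto_logMean_sub_logMean_iterate_cesaro (hψ : ∀ n, |ψ n| ≤ M) (k : ℕ) :
    Tendsto (logMean ψ - logMean (cesaro^[k] ψ)) atTop (𝓝 0) := by
  induction k with
  | zero =>
    rw [Function.iterate_zero, id, sub_self]
    exact tendsto_const_nhds
  | succ k ih =>
    rw [Function.iterate_succ_apply', ← sub_add_sub_cancel _ (logMean (cesaro^[k] ψ)),
      ← add_zero 0]
    exact ih.add (tendsto_logMean_sub_logMean_cesaro (abs_iterate_cesaro_le hψ k))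

lemma eventually_logMean_lt_of_eventually_le {c b : ℝ} (hψ : ∀ᶠ n in atTop, ψ n ≤ c)
    (hcb : c < b) : ∀ᶠ n in atTop, logMean ψ n < b := by
  obtain ⟨N, hN⟩ := eventually_atTop.1 hψ
  set B := ∑ i ∈ Icc 1 N, (ψ i - c) / i
  have hB (n : ℕ) (hn : N ≤ n) : ∑ i ∈ Icc 1 n, (ψ i - c) / i ≤ B :=
    sum_le_sum_of_subset_of_nonpos' (Icc_subset_Icc_right hn) fun i hi hiN =>
      div_nonpos_of_nonpos_of_nonneg (sub_nonpos.2 (hN i (by simp at hi hiN; omega)))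
        i.cast_nonneg
  have hR : Tendsto (fun n : ℕ => 1 / Real.log n * B + c * logMean (fun _ => 1) n) atTop
      (𝓝 c) := by
    simpa using (tendsto_one_div_log_natCast.mul_const B).add (tendsto_logMean_one.const_mul c)
  filter_upwards [eventually_ge_atTop N, hR.eventually (gt_mem_nhds hcb)] with n hn hRn
  refine lt_of_le_of_lt ?_ hRn
  rw [logMean_eq_logMean_sub_add ψ c]
  gcongr
  exact mul_le_mul_of_nonneg_left (hB n hn) (one_div_nonneg.2 (Real.log_natCast_nonneg n))

lemma eventually_logMean_lt {α b : ℝ} (hψ : ∀ n, |ψ n| ≤ M)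
    (h : ∀ c, α < c → ∃ k, ∀ᶠ n in atTop, cesaro^[k] ψ n ≤ c) (hb : α < b) :
    ∀ᶠ n in atTop, logMean ψ n < b := by
  obtain ⟨c, hαc, hcb⟩ := exists_between hb
  obtain ⟨d, hcd, hdb⟩ := exists_between hcb
  obtain ⟨k, hk⟩ := h c hαc
  filter_upwards [eventually_logMean_lt_of_eventually_le hk hcd,
    (tendsto_logMean_sub_logMean_iterate_cesaro hψ k).eventually (gt_mem_nhds (sub_pos.2 hdb))]
    with n hd hdiff
  rw [Pi.sub_apply] at hdiff
  linarith

end LogMean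

/-- If a bounded sequence `φ` is `C_∞` summable to `α`, then `φ` is summable to `α` by
the logarithmic method: `(1/log n) ∑_{i=1}^n φ(i)/i → α` as `n → ∞`. -/
theorem logarithmic_of_cInfty_summable (φ : ℕ → ℝ) (hbdd : ∃ M : ℝ, ∀ n, |φ n| ≤ M)
    (α : ℝ)
    (h : Tendsto (fun k : ℕ => limsup (fun n : ℕ => cesaro^[k] φ n) atTop) atTop
          (nhds α) ∧
         Tendsto (fun k : ℕ => liminf (fun n : ℕ => cesaro^[k] φ n) atTop) atTop
          (nhds α)) :
    Tendsto (fun n : ℕ =>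
        (1 / Real.log (n : ℝ)) * ∑ i ∈ Finset.Icc 1 n, φ i / (i : ℝ)) atTop
      (nhds α) := by
  obtain ⟨M, hM⟩ := hbdd
  have hM_neg : ∀ n, |(-φ) n| ≤ M := by simpa using hM
  have h_neg (c : ℝ) (hc : -α < c) : ∃ k, ∀ᶠ n in atTop, cesaro^[k] (-φ) n ≤ c := by
    obtain ⟨k, hk⟩ := exists_iterate_cesaro_eventually_ge hM h.2 (neg_lt.1 hc)
    exact ⟨k, hk.mono fun n hn => by simpa [iterate_cesaro_neg] using neg_le.1 hn⟩
  refine tendsto_order.2 ⟨fun a ha => ?_, fun b hb =>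
    eventually_logMean_lt hM (fun c hc => exists_iterate_cesaro_eventually_le hM h.1 hc) hb⟩
  filter_upwards [eventually_logMean_lt hM_neg h_neg (neg_lt_neg ha)] with n hn
  rwa [logMean_neg, Pi.neg_apply, neg_lt_neg_iff] at hn
end
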